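/- arXiv:2407.21563 — 13 statements merged into one kernel-verified Lean document; each statement's English description precedes it below -/
import Mathlib

section
/- Let G be a pure κ-sparse gapset with multiplicity m. Then κ ≤ m. -/
/-- A gapset: a finite set of positive integers such that whenever `z ∈ G`
and `z = x + y` with `x, y` positive, then `x ∈ G` or `y ∈ G`. -/
def IsGapset (G : Finset ℕ) : Prop :=
  0 ∉ G ∧ ∀ z ∈ G, ∀ x y : ℕ, 0 < x → 0 < y → z = x + y → x ∈ G ∨ y ∈ G

/-- The multiplicity of a gapset: the least positive integer not in `G`. -/
noncomputable def mult (G : Finset ℕ) : ℕ := sInf {s : ℕ | 0 < s ∧ s ∉ G}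

/-- `a` and `b` are consecutive elements of `G` (in the natural order). -/
def Consec (G : Finset ℕ) (a b : ℕ) : Prop :=
  a ∈ G ∧ b ∈ G ∧ a < b ∧ ∀ c ∈ G, c ≤ a ∨ b ≤ c

/-- `G` is pure `κ`-sparse: all consecutive differences are at most `κ`
and some consecutive difference equals `κ`. -/
def PureSparse (κ : ℕ) (G : Finset ℕ) : Prop :=
  (∀ a b, Consec G a b → b - a ≤ κ) ∧ (∃ a b, Consec G a b ∧ b - a = κ)

/-- The Frobenius number (largest element) of a gapset. -/
def frob (G : Finset ℕ) : ℕ := G.sup id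

/-- The depth of a gapset: `⌈c/m⌉` where `c = frob G + 1` is the conductor. -/
noncomputable def depth (G : Finset ℕ) : ℕ := (frob G + mult G) / mult G

/-- `x` is a pseudo-Frobenius number of `G`. -/
def PseudoFrob (G : Finset ℕ) (x : ℕ) : Prop :=
  x ∈ G ∧ ∀ s : ℕ, 0 < s → s ∉ G → x + s ∉ G

theorem stmt4 (κ : ℕ) (G : Finset ℕ) (hG : IsGapset G) (hps : PureSparse κ G) :
    κ ≤ mult G := by
  by_contra h
  push_neg at h
  obtain ⟨a, b, ⟨haG, hbG, hab, hcons⟩, hdiff⟩ := hps.2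
  have hne : {s : ℕ | 0 < s ∧ s ∉ G}.Nonempty := by
    refine ⟨G.sup id + 1, Nat.succ_pos _, fun hmem => ?_⟩
    have := Finset.le_sup (f := id) hmem
    simp only [id] at this
    omega
  obtain ⟨hmpos, hmnotG⟩ : 0 < mult G ∧ mult G ∉ G := Nat.sInf_mem hne
  have ha_pos : 0 < a := Nat.pos_of_ne_zero (fun h0 => hG.1 (h0 ▸ haG))
  rcases hG.2 b hbG (mult G) (b - mult G) hmpos (by omega) (by omega) with h1 | h2
  · exact hmnotG h1
  · rcases hcons _ h2 with h3 | h3 <;> omega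
end

section
/- Let G = {ℓ₁ < ... < ℓ_α < ℓ_{α+1} = ℓ_α + κ < ... < ℓ_g} be a pure κ-sparse gapset with multiplicity m, where α is the largest index with ℓ_{α+1} - ℓ_α = κ. Then ℓ_g ≤ ℓ_α + m. -/
theorem stmt5 (κ : ℕ) (G : Finset ℕ) (hG : IsGapset G) (hps : PureSparse κ G)
    (a b : ℕ) (hab : Consec G a b) (hdiff : b - a = κ)
    (hmax : ∀ a' b', Consec G a' b' → b' - a' = κ → a' ≤ a) :
    frob G ≤ a + mult G := by
  by_contra hcon
  push_neg at hcon
  set m := mult G with hm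
  have hGne : G.Nonempty := ⟨a, hab.1⟩
  obtain ⟨L, hLG, hLeq⟩ := Finset.exists_mem_eq_sup G hGne id
  have hfrob : frob G = L := hLeq
  have hle : ∀ g ∈ G, g ≤ frob G := fun g hg => Finset.le_sup (f := id) hg
  have hset : ({s : ℕ | 0 < s ∧ s ∉ G}).Nonempty :=
    ⟨frob G + 1, Nat.succ_pos _, fun h => by have := hle _ h; omega⟩
  have hmmem : 0 < m ∧ m ∉ G := Nat.sInf_mem hset
  have hsub : ∀ x ∈ G, m < x → x - m ∈ G := by
    intro x hx hlt
    rcases hG.2 x hx m (x - m) hmmem.1 (by omega) (by omega) with h | h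
    · exact absurd h hmmem.2
    · exact h
  have hb : b = a + κ := by have := hab.2.2.1; omega
  have hgap : ∀ i, a < i → i < b → i ∉ G := by
    intro i h1 h2 hi
    rcases hab.2.2.2 i hi with h | h <;> omega
  have hclosed : ∀ i, a < i → i < b → i + m ∉ G := by
    intro i h1 h2 hmem
    rcases hG.2 (i + m) hmem i m (by omega) hmmem.1 rfl with h | h
    · exact hgap i h1 h2 h
    · exact hmmem.2 h
  have hLa : a + m < L := by omega
  -- minimal element of G greater than a
  have hFne : (G.filter (fun x => a < x)).Nonempty :=
    ⟨L, Finset.mem_filter.2 ⟨hLG, by omega⟩⟩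
  set c := (G.filter (fun x => a < x)).min' hFne with hc
  have hcmem := Finset.min'_mem _ hFne
  rw [Finset.mem_filter] at hcmem
  have hcle : c ≤ a + m := by
    by_contra hcgt
    push_neg at hcgt
    have hc1 : c - m ∈ G := hsub c hcmem.1 (by omega)
    have hc2 : c - m ∈ G.filter (fun x => a < x) :=
      Finset.mem_filter.2 ⟨hc1, by omega⟩
    have := Finset.min'_le _ _ hc2
    omega
  -- a' : largest element of G that is ≤ a + m
  have hF2ne : (G.filter (fun x => x ≤ a + m)).Nonempty :=
    ⟨c, Finset.mem_filter.2 ⟨hcmem.1, hcle⟩⟩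
  set a' := (G.filter (fun x => x ≤ a + m)).max' hF2ne with ha'
  have ha'mem := Finset.max'_mem _ hF2ne
  rw [Finset.mem_filter] at ha'mem
  have ha'max : ∀ g ∈ G, g ≤ a + m → g ≤ a' := by
    intro g hg hgle
    have h := Finset.le_max' (G.filter (fun x => x ≤ a + m)) g
      (Finset.mem_filter.2 ⟨hg, hgle⟩)
    exact h.trans ha'.symm.le
  have ha'gt : a < a' := lt_of_lt_of_le hcmem.2 (ha'max c hcmem.1 hcle)
  -- b' : smallest element of G greater than a'
  have hF3ne : (G.filter (fun x => a' < x)).Nonempty :=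
    ⟨L, Finset.mem_filter.2 ⟨hLG, by omega⟩⟩
  set b' := (G.filter (fun x => a' < x)).min' hF3ne with hb'
  have hb'mem := Finset.min'_mem _ hF3ne
  rw [Finset.mem_filter] at hb'mem
  have hconsec : Consec G a' b' := by
    refine ⟨ha'mem.1, hb'mem.1, hb'mem.2, ?_⟩
    intro x hx
    by_cases hxa : x ≤ a'
    · exact Or.inl hxa
    · exact Or.inr (Finset.min'_le _ _ (Finset.mem_filter.2 ⟨hx, by omega⟩))
  have hb'gt : a + m < b' := by
    by_contra hh
    push_neg at hh
    have := ha'max b' hb'mem.1 hh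
    omega
  have hb'ge : a + m + κ ≤ b' := by
    by_contra hh
    push_neg at hh
    have h1 : a < b' - m := by omega
    have h2 : b' - m < b := by omega
    have := hclosed (b' - m) h1 h2
    rw [show b' - m + m = b' by omega] at this
    exact this hb'mem.1
  have hub : b' - a' ≤ κ := hps.1 a' b' hconsec
  have heq : b' - a' = κ := by omega
  have := hmax a' b' hconsec heq
  omega
end

section
/- Let G be a gapset with multiplicity m, depth q, and canonical partition G = G₀ ∪ G₁ ∪ ... ∪ G_{q-1}, where G_i = G ∩ [im+1, (i+1)m - 1]. Then every element of G_{q-1} is a pseudo-Frobenius number of G. -/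
theorem stmt6 (G : Finset ℕ) (hG : IsGapset G) (x : ℕ) (hx : x ∈ G)
    (hlo : (depth G - 1) * mult G + 1 ≤ x) (hhi : x ≤ depth G * mult G - 1) :
    PseudoFrob G x := by
  refine ⟨hx, fun s hs hsG hmem => ?_⟩
  have hne : {t : ℕ | 0 < t ∧ t ∉ G}.Nonempty := by
    refine ⟨G.sup id + 1, Nat.succ_pos _, fun h => ?_⟩
    have := Finset.le_sup (f := id) h
    simp only [id] at this
    omega
  have hm0 : 0 < mult G := (Nat.sInf_mem hne).1
  have hsm : s < mult G → s ∈ G := fun h => by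
    by_contra hc
    have : s ∈ {t : ℕ | 0 < t ∧ t ∉ G} := ⟨hs, hc⟩
    exact absurd (Nat.sInf_le this) (not_le.mpr h)
  have hfle : x + s ≤ frob G := Finset.le_sup (f := id) hmem
  have hqm : frob G + 1 ≤ depth G * mult G := by
    have h1 : frob G + mult G < (frob G + mult G) / mult G * mult G + mult G :=
      Nat.lt_div_mul_add hm0
    rw [depth]
    omega
  have h1 : 1 ≤ depth G := by
    rw [depth, Nat.one_le_div_iff hm0]
    omega
  obtain ⟨k, hk⟩ : ∃ k, depth G = k + 1 := ⟨depth G - 1, by omega⟩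
  rw [hk] at hlo hhi hqm
  simp only [Nat.add_sub_cancel, Nat.add_mul, Nat.one_mul] at hlo hhi hqm
  have hsG' : s ∈ G := hsm (by omega)
  exact hsG hsG'
end

section
/- Let n > 2 and let G be a pure (2n)-sparse gapset with genus g = 3n+1. Then there is a unique index α ∈ [1, g-1] such that ℓ_{α+1} - ℓ_α = 2n, where G = {ℓ₁ < ... < ℓ_g}. -/
lemma frob_mem' {G : Finset ℕ} (h : G.Nonempty) : frob G ∈ G := by
  obtain ⟨b, hb, hsup⟩ := Finset.exists_mem_eq_sup G h id
  rw [frob, hsup]; exact hb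

lemma one_le_mem' {G : Finset ℕ} (hG : IsGapset G) {x : ℕ} (hx : x ∈ G) : 1 ≤ x := by
  rcases Nat.eq_zero_or_pos x with h | h
  · exact absurd (h ▸ hx) hG.1
  · exact h

lemma frob_le' {G : Finset ℕ} (hG : IsGapset G) (h : G.Nonempty) :
    frob G + 1 ≤ 2 * G.card := by
  set f := frob G with hf
  have hfG : f ∈ G := frob_mem' h
  have hf1 : 1 ≤ f := one_le_mem' hG hfG
  set S := G.erase f with hS
  have hsub : Finset.Icc 1 (f - 1) ⊆ S ∪ S.image (f - ·) := by
    intro x hx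
    simp only [Finset.mem_Icc] at hx
    have hxf : x < f := by omega
    have := hG.2 f hfG x (f - x) hx.1 (by omega) (by omega)
    rcases this with hxG | hfxG
    · exact Finset.mem_union_left _ (Finset.mem_erase.2 ⟨hxf.ne, hxG⟩)
    · refine Finset.mem_union_right _ (Finset.mem_image.2 ⟨f - x, ?_, by omega⟩)
      exact Finset.mem_erase.2 ⟨by omega, hfxG⟩
  have h1 : (Finset.Icc 1 (f - 1)).card = f - 1 + 1 - 1 := Nat.card_Icc _ _
  have h2 : S.card = G.card - 1 := Finset.card_erase_of_mem hfG
  have h3 := Finset.card_le_card hsub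
  have h4 := Finset.card_union_le S (S.image (f - ·))
  have h5 := Finset.card_image_le (f := (f - ·)) (s := S)
  have hcard1 : 1 ≤ G.card := Finset.card_pos.2 h
  omega

lemma no_two' (n : ℕ) (hn : 2 < n) (G : Finset ℕ) (hG : IsGapset G)
    (hcard : G.card = 3 * n + 1) {a b c d : ℕ} (hab : Consec G a b) (hcd : Consec G c d)
    (h1 : b - a = 2 * n) (h2 : d - c = 2 * n) (hac : a < c) : False := by
  have hne : G.Nonempty := Finset.card_pos.1 (by omega)
  have hfle := frob_le' hG hne
  set f := frob G with hf
  have hbc : b ≤ c := by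
    rcases hab.2.2.2 c hcd.1 with h | h
    · omega
    · exact h
  have hmemf : ∀ x ∈ G, x ≤ f := fun x hx => Finset.le_sup (f := id) hx
  have ha1 : 1 ≤ a := one_le_mem' hG hab.1
  have hbf : b ≤ f := hmemf b hab.2.1
  have hdf : d ≤ f := hmemf d hcd.2.1
  have hcd' : c < d := hcd.2.2.1
  have hab' : a < b := hab.2.2.1
  have hGsub : G ⊆ Finset.Icc 1 f := fun x hx =>
    Finset.mem_Icc.2 ⟨one_le_mem' hG hx, hmemf x hx⟩
  set U : Finset ℕ := Finset.Ioo a b ∪ Finset.Ioo c d with hU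
  have hUsub : U ⊆ Finset.Icc 1 f := by
    intro x hx
    simp only [hU, Finset.mem_union, Finset.mem_Ioo] at hx
    refine Finset.mem_Icc.2 ⟨by omega, by omega⟩
  have hdisjGU : Disjoint G U := by
    rw [Finset.disjoint_left]
    intro x hxG hxU
    simp only [hU, Finset.mem_union, Finset.mem_Ioo] at hxU
    rcases hxU with ⟨h3, h4⟩ | ⟨h3, h4⟩
    · rcases hab.2.2.2 x hxG with h | h <;> omega
    · rcases hcd.2.2.2 x hxG with h | h <;> omega
  have hdisj2 : Disjoint (Finset.Ioo a b) (Finset.Ioo c d) := by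
    rw [Finset.disjoint_left]
    intro x hx1 hx2
    simp only [Finset.mem_Ioo] at hx1 hx2
    omega
  have hcardU : U.card = (2 * n - 1) + (2 * n - 1) := by
    rw [hU, Finset.card_union_of_disjoint hdisj2, Nat.card_Ioo, Nat.card_Ioo]
    omega
  have htot : (G ∪ U).card ≤ f := by
    have := Finset.card_le_card (Finset.union_subset hGsub hUsub)
    simpa using this
  rw [Finset.card_union_of_disjoint hdisjGU, hcard, hcardU] at htot
  omega

theorem stmt8 (n : ℕ) (hn : 2 < n) (G : Finset ℕ) (hG : IsGapset G)
    (hps : PureSparse (2 * n) G) (hcard : G.card = 3 * n + 1) :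
    ∃! p : ℕ × ℕ, Consec G p.1 p.2 ∧ p.2 - p.1 = 2 * n := by
  obtain ⟨hbd, a, b, hab, hab2n⟩ := hps
  refine ⟨(a, b), ⟨hab, hab2n⟩, ?_⟩
  rintro ⟨c, d⟩ ⟨hcd, hcd2n⟩
  simp only at hcd hcd2n
  have hac : a = c := by
    rcases lt_trichotomy a c with h | h | h
    · exact absurd (no_two' n hn G hG hcard hab hcd hab2n hcd2n h) id
    · exact h
    · exact absurd (no_two' n hn G hG hcard hcd hab hcd2n hab2n h) id
  have hbd' : b = d := by
    have h1 : b ≤ d := by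
      rcases hab.2.2.2 d hcd.2.1 with h | h
      · have := hcd.2.2.1; omega
      · exact h
    have h2 : d ≤ b := by
      rcases hcd.2.2.2 b hab.2.1 with h | h
      · have := hab.2.2.1; omega
      · exact h
    omega
  simp [Prod.ext_iff, hac, hbd']
end

section
/- Let n be a positive integer and G a pure (2n)-sparse gapset of genus g = 3n+1 and multiplicity m. If G is symmetric (i.e., its largest element equals 2g - 1), then m = 2n. -/
theorem stmt9 (n : ℕ) (hn : 0 < n) (G : Finset ℕ) (hG : IsGapset G)
    (hps : PureSparse (2 * n) G) (hcard : G.card = 3 * n + 1)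
    (hsym : frob G = 2 * (3 * n + 1) - 1) :
    mult G = 2 * n := by
  -- basic facts
  have hne : G.Nonempty := Finset.card_pos.mp (by rw [hcard]; omega)
  have hle : ∀ x ∈ G, x ≤ frob G := fun x hx => Finset.le_sup (f := id) hx
  have hFmem : frob G ∈ G := by
    obtain ⟨b, hb, hsup⟩ := Finset.exists_mem_eq_sup G hne id
    rw [frob, hsup]; exact hb
  have hpos : ∀ x ∈ G, 0 < x := by
    intro x hx
    rcases Nat.eq_zero_or_pos x with h | h
    · exact absurd (h ▸ hx) hG.1
    · exact h
  have hcl : ∀ x y : ℕ, 0 < x → 0 < y → x + y ∈ G → x ∈ G ∨ y ∈ G :=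
    fun x y hx hy h => hG.2 _ h x y hx hy rfl
  have hF61 : frob G = 6 * n + 1 := by omega
  -- mult facts
  have hSne : {s : ℕ | 0 < s ∧ s ∉ G}.Nonempty := by
    refine ⟨frob G + 1, by omega, fun h => ?_⟩
    have := hle _ h; omega
  have hm_mem : 0 < mult G ∧ mult G ∉ G := Nat.sInf_mem hSne
  have hlt : ∀ j : ℕ, 0 < j → j < mult G → j ∈ G := by
    intro j h1 h2
    by_contra hj
    have : mult G ≤ j := Nat.sInf_le (show j ∈ {s : ℕ | 0 < s ∧ s ∉ G} from ⟨h1, hj⟩)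
    omega
  -- Part 1 : 2 * n ≤ mult G
  have hpart1 : 2 * n ≤ mult G := by
    obtain ⟨a, b, hab, hdiff⟩ := hps.2
    by_contra hlt'
    push_neg at hlt'
    obtain ⟨haG, hbG, haltb, hmid⟩ := hab
    have hapos := hpos a haG
    have hbm : b - mult G ∉ G := by
      intro hmem
      rcases hmid _ hmem with h | h <;> omega
    have heq : (b - mult G) + mult G = b := by omega
    rcases hcl (b - mult G) (mult G) (by omega) hm_mem.1 (by rw [heq]; exact hbG) with h | h
    · exact hbm h
    · exact hm_mem.2 h
  -- "at least one of x, F - x in G"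
  have hone : ∀ x : ℕ, 0 < x → x < frob G → x ∉ G → frob G - x ∈ G := by
    intro x hx hxF hxG
    have hsum : x + (frob G - x) = frob G := by omega
    rcases hcl x (frob G - x) hx (by omega) (by rw [hsum]; exact hFmem) with h | h
    · exact absurd h hxG
    · exact h
  -- counting argument: the image of the gaps-complement under x ↦ F - x is G.erase F
  have hsubI : G ⊆ Finset.Icc 1 (frob G) :=
    fun x hx => Finset.mem_Icc.mpr ⟨hpos x hx, hle x hx⟩
  have hcardH : (Finset.Icc 1 (frob G) \ G).card = 3 * n := by
    rw [Finset.card_sdiff_of_subset hsubI, Nat.card_Icc, hcard]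
    omega
  have himg : (Finset.Icc 1 (frob G) \ G).image (fun x => frob G - x)
      = G.erase (frob G) := by
    apply Finset.eq_of_subset_of_card_le
    · intro y hy
      simp only [Finset.mem_image] at hy
      obtain ⟨x, hx, rfl⟩ := hy
      obtain ⟨hxI, hxG⟩ := Finset.mem_sdiff.mp hx
      obtain ⟨hx1, hx2⟩ := Finset.mem_Icc.mp hxI
      have hxF : x < frob G := lt_of_le_of_ne hx2 (fun h => hxG (h ▸ hFmem))
      exact Finset.mem_erase.mpr ⟨by omega, hone x hx1 hxF hxG⟩
    · have hinj : Set.InjOn (fun x => frob G - x)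
          (Finset.Icc 1 (frob G) \ G : Finset ℕ) := by
        intro x hx y hy hxy
        have h1 := Finset.mem_Icc.mp (Finset.mem_sdiff.mp (Finset.mem_coe.mp hx)).1
        have h2 := Finset.mem_Icc.mp (Finset.mem_sdiff.mp (Finset.mem_coe.mp hy)).1
        have hxy' : frob G - x = frob G - y := hxy
        omega
      rw [Finset.card_erase_of_mem hFmem, hcard,
        Finset.card_image_of_injOn hinj, hcardH]
      omega
  -- the symmetry direction we need
  have hkey : ∀ x ∈ G, x < frob G → frob G - x ∉ G := by
    intro x hx hxF hFx
    have hxe : x ∈ (Finset.Icc 1 (frob G) \ G).image (fun y => frob G - y) := by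
      rw [himg]
      exact Finset.mem_erase.mpr ⟨by omega, hx⟩
    obtain ⟨y, hyH, hyx⟩ := Finset.mem_image.mp hxe
    obtain ⟨hyI, hyG⟩ := Finset.mem_sdiff.mp hyH
    obtain ⟨hy1, hy2⟩ := Finset.mem_Icc.mp hyI
    have hyx' : frob G - y = x := hyx
    have : y = frob G - x := by omega
    exact hyG (this ▸ hFx)
  -- mult G ≤ 6 * n
  have hm6 : mult G ≤ 6 * n := by
    by_contra h
    push_neg at h
    have hsub : Finset.Icc 1 (6 * n) ⊆ G := by
      intro j hj
      obtain ⟨hj1, hj2⟩ := Finset.mem_Icc.mp hj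
      exact hlt j hj1 (by omega)
    have := Finset.card_le_card hsub
    rw [Nat.card_Icc, hcard] at this
    omega
  -- Part 2 : mult G ≤ 2 * n
  have h1G : (1 : ℕ) ∈ G := hlt 1 one_pos (by omega)
  have hAne : (G.filter (fun x => x ≤ frob G - mult G)).Nonempty :=
    ⟨1, Finset.mem_filter.mpr ⟨h1G, by omega⟩⟩
  obtain ⟨a, haA, hamax⟩ : ∃ a ∈ G.filter (fun x => x ≤ frob G - mult G),
      ∀ c ∈ G.filter (fun x => x ≤ frob G - mult G), c ≤ a :=
    ⟨_, Finset.max'_mem _ hAne, fun c hc => Finset.le_max' _ c hc⟩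
  have haG : a ∈ G := (Finset.mem_filter.mp haA).1
  have hale : a ≤ frob G - mult G := (Finset.mem_filter.mp haA).2
  have hcons : Consec G a (frob G) := by
    refine ⟨haG, hFmem, by omega, ?_⟩
    intro c hc
    by_cases hcle : c ≤ frob G - mult G
    · exact Or.inl (hamax c (Finset.mem_filter.mpr ⟨hc, hcle⟩))
    · push_neg at hcle
      have hcF := hle c hc
      rcases eq_or_lt_of_le hcF with h | h
      · exact Or.inr (le_of_eq h.symm)
      · exfalso
        have hcpos := hpos c hc
        have hjG : frob G - c ∈ G := hlt _ (by omega) (by omega)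
        have := hkey (frob G - c) hjG (by omega)
        rw [show frob G - (frob G - c) = c by omega] at this
        exact this hc
  have := hps.1 a (frob G) hcons
  omega
end

section
/- Let n be a positive integer and G a pure (2n)-sparse gapset with genus g = 3n+1 and depth q. Then G is symmetric if and only if q = 4. -/
namespace Stmt11Aux

variable {G : Finset ℕ}

lemma le_frob {x : ℕ} (hx : x ∈ G) : x ≤ frob G := Finset.le_sup (f := id) hx

lemma frob_mem (h : G.Nonempty) : frob G ∈ G := by
  obtain ⟨b, hb, he⟩ := Finset.exists_mem_eq_sup G h id
  simpa [frob, he] using hb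

lemma mult_pos_notMem (G : Finset ℕ) : 0 < mult G ∧ mult G ∉ G := by
  have hne : {s : ℕ | 0 < s ∧ s ∉ G}.Nonempty :=
    ⟨frob G + 1, Nat.succ_pos _, fun h => by have := le_frob h; omega⟩
  exact Nat.sInf_mem hne

lemma lt_mult_mem {j : ℕ} (h0 : 0 < j) (hj : j < mult G) : j ∈ G := by
  by_contra h
  have hle : mult G ≤ j :=
    Nat.sInf_le (show j ∈ {s : ℕ | 0 < s ∧ s ∉ G} from ⟨h0, h⟩)
  omega

lemma downshift (hG : IsGapset G) {z s : ℕ} (hz : z ∈ G) (hs : s ∉ G)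
    (h1 : 0 < s) (h2 : s < z) : z - s ∈ G := by
  rcases hG.2 z hz (z - s) s (by omega) h1 (by omega) with h | h
  · exact h
  · exact absurd h hs

lemma mul_notMem (hG : IsGapset G) : ∀ k, k * mult G ∉ G := by
  have hm := mult_pos_notMem G
  intro k
  induction k with
  | zero => simpa using hG.1
  | succ k ih =>
    intro h
    rcases Nat.eq_zero_or_pos k with rfl | hk
    · exact hm.2 (by simpa using h)
    · rcases hG.2 _ h (k * mult G) (mult G) (Nat.mul_pos hk hm.1) hm.1 (by ring)
        with h' | h'
      · exact ih h'
      · exact hm.2 h'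

lemma mult_ge (hG : IsGapset G) {a b : ℕ} (hc : Consec G a b)
    (hlt : mult G < b - a) : False := by
  obtain ⟨ha, hb, hab, hcons⟩ := hc
  have hm := mult_pos_notMem G
  have key : ∀ x, a < x → x ∉ G := by
    intro x
    induction x using Nat.strong_induction_on with
    | _ x ih =>
      intro hax hxG
      by_cases hx : x ≤ a + mult G
      · rcases hcons x hxG with h | h
        · omega
        · omega
      · have h1 : x - mult G ∈ G := downshift hG hxG hm.2 hm.1 (by omega)
        exact ih (x - mult G) (by omega) (by omega) h1
  exact key b hab hb

lemma counting (hG : IsGapset G) (hne : G.Nonempty) :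
    frob G + 1 ≤ 2 * G.card ∧
    (frob G + 1 = 2 * G.card → ∀ z ∈ G, z < frob G → frob G - z ∉ G) := by
  have hfG : frob G ∈ G := frob_mem hne
  have hsub : G ⊆ Finset.Icc 1 (frob G) := by
    intro x hx
    simp only [Finset.mem_Icc]
    have h0 : x ≠ 0 := fun h => hG.1 (h ▸ hx)
    exact ⟨by omega, le_frob hx⟩
  set A := Finset.Icc 1 (frob G) \ G with hA
  have hcardA : A.card = frob G - G.card := by
    rw [hA, Finset.card_sdiff_of_subset hsub, Nat.card_Icc]
    omega
  have himg : A.image (fun x => frob G - x) ⊆ G.erase (frob G) := by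
    intro y hy
    simp only [Finset.mem_image, hA, Finset.mem_sdiff, Finset.mem_Icc] at hy
    obtain ⟨x, ⟨⟨hx1, hx2⟩, hxG⟩, rfl⟩ := hy
    have hxf : x ≠ frob G := fun h => hxG (h ▸ hfG)
    have hmem : frob G - x ∈ G := by
      rcases hG.2 (frob G) hfG (frob G - x) x (by omega) (by omega) (by omega)
        with h | h
      · exact h
      · exact absurd h hxG
    exact Finset.mem_erase.mpr ⟨by omega, hmem⟩
  have hinj : Set.InjOn (fun x => frob G - x) A := by
    intro x hx y hy hxy
    simp only [hA, Finset.coe_sdiff, Set.mem_diff, Finset.coe_Icc,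
      Set.mem_Icc, Finset.mem_coe] at hx hy
    simp only at hxy
    omega
  have hcard_img : (A.image (fun x => frob G - x)).card = A.card :=
    Finset.card_image_of_injOn hinj
  have hle : A.card ≤ (G.erase (frob G)).card := by
    rw [← hcard_img]; exact Finset.card_le_card himg
  have hgpos : 1 ≤ G.card := Finset.card_pos.mpr hne
  have herase : (G.erase (frob G)).card = G.card - 1 :=
    Finset.card_erase_of_mem hfG
  have hfg : G.card ≤ frob G := by
    have h1 : G.card ≤ (Finset.Icc 1 (frob G)).card := Finset.card_le_card hsub
    rw [Nat.card_Icc] at h1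
    omega
  refine ⟨by omega, ?_⟩
  intro heq z hz hzf
  have hAcard2 : (G.erase (frob G)).card ≤ (A.image fun x => frob G - x).card := by
    omega
  have himeq := Finset.eq_of_subset_of_card_le himg hAcard2
  have hz' : z ∈ A.image (fun x => frob G - x) := by
    rw [himeq]; exact Finset.mem_erase.mpr ⟨by omega, hz⟩
  simp only [Finset.mem_image, hA, Finset.mem_sdiff, Finset.mem_Icc] at hz'
  obtain ⟨x, ⟨⟨hx1, hx2⟩, hxG⟩, hxz⟩ := hz'
  have hx : frob G - z = x := by omega
  rw [hx]; exact hxG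

end Stmt11Aux

open Stmt11Aux in
theorem stmt11 (n : ℕ) (hn : 0 < n) (G : Finset ℕ) (hG : IsGapset G)
    (hps : PureSparse (2 * n) G) (hcard : G.card = 3 * n + 1) :
    frob G = 2 * (3 * n + 1) - 1 ↔ depth G = 4 := by
  have hne : G.Nonempty := Finset.card_pos.mp (by omega)
  have hm := mult_pos_notMem G
  have hfG : frob G ∈ G := frob_mem hne
  have hcount := counting hG hne
  have hfle : frob G + 1 ≤ 2 * (3 * n + 1) := by rw [← hcard]; exact hcount.1
  obtain ⟨a, b, hcab, hdab⟩ := hps.2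
  have hm2n : 2 * n ≤ mult G := by
    by_contra h
    exact mult_ge hG hcab (by omega)
  have hmle : mult G ≤ 3 * n + 2 := by
    by_contra h
    have hsub : Finset.Icc 1 (3 * n + 2) ⊆ G := by
      intro j hj
      simp only [Finset.mem_Icc] at hj
      exact lt_mult_mem (by omega) (by omega)
    have h1 := Finset.card_le_card hsub
    rw [Nat.card_Icc, hcard] at h1
    omega
  constructor
  · intro hf6
    have hf : frob G = 6 * n + 1 := by omega
    have hsym : ∀ z ∈ G, z < frob G → frob G - z ∉ G :=
      hcount.2 (by rw [hcard]; omega)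
    have hfmG : frob G - mult G ∈ G := downshift hG hfG hm.2 hm.1 (by omega)
    have hcfm : Consec G (frob G - mult G) (frob G) := by
      refine ⟨hfmG, hfG, by omega, ?_⟩
      intro c hc
      by_contra hcc
      push_neg at hcc
      have hc1 : frob G - c ∉ G := hsym c hc (by omega)
      have hc2 : frob G - c ∈ G := lt_mult_mem (by omega) (by omega)
      exact hc1 hc2
    have hmlt : mult G ≤ 2 * n := by
      have := hps.1 _ _ hcfm
      omega
    show (frob G + mult G) / mult G = 4
    have hmeq : mult G = 2 * n := le_antisymm hmlt hm2n
    rw [hmeq, hf]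
    exact Nat.div_eq_of_lt_le (by omega) (by omega)
  · intro hd
    have hd' : (frob G + mult G) / mult G = 4 := hd
    have h4 : 4 * mult G ≤ frob G + mult G := by
      have h := Nat.div_mul_le_self (frob G + mult G) (mult G)
      rw [hd'] at h
      omega
    have h3m : frob G ≠ 3 * mult G := fun h => (mul_notMem hG 3) (h ▸ hfG)
    omega
end

section
/- Let n be a positive integer and G = {ℓ₁ < ... < ℓ_α < ℓ_{α+1} < ... < ℓ_g} a pure (2n)-sparse gapset with genus g = 3n+1, multiplicity m, and depth q ≤ 3, where α = max{i : ℓ_{i+1} - ℓ_i = 2n}. Then ℓ_α ≤ 2m - 1. -/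
theorem stmt13 (n : ℕ) (hn : 0 < n) (G : Finset ℕ) (hG : IsGapset G)
    (hps : PureSparse (2 * n) G) (hcard : G.card = 3 * n + 1)
    (hq : depth G ≤ 3) (a b : ℕ) (hab : Consec G a b) (hdiff : b - a = 2 * n)
    (hmax : ∀ a' b', Consec G a' b' → b' - a' = 2 * n → a' ≤ a) :
    a ≤ 2 * mult G - 1 := by
  obtain ⟨h0, hadd⟩ := hG
  obtain ⟨haG, hbG, haltb, -⟩ := hab
  have hne : G.Nonempty := Finset.card_pos.mp (by omega)
  have hFub : ∀ x ∈ G, x ≤ frob G := fun x hx => Finset.le_sup (f := id) hx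
  have hFmem : frob G ∈ G := by
    obtain ⟨x, hx, hx2⟩ := Finset.exists_mem_eq_sup G hne id
    rw [frob, hx2]; exact hx
  have hF : frob G = frob G := rfl
  -- multiplicity is positive
  have hmne : {s : ℕ | 0 < s ∧ s ∉ G}.Nonempty :=
    ⟨(frob G) + 1, by omega, fun h => by have := hFub _ h; omega⟩
  have hmmem := Nat.sInf_mem hmne
  have hmpos : 0 < mult G := hmmem.1
  -- the pairing argument: (frob G) ≤ 2 * G.card - 1
  have hsub : G ⊆ Finset.Icc 1 (frob G) := fun x hx => Finset.mem_Icc.mpr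
    ⟨Nat.one_le_iff_ne_zero.mpr (fun h => h0 (h ▸ hx)), hFub x hx⟩
  have hmap : ∀ s ∈ Finset.Icc 1 (frob G) \ G, (frob G) - s ∈ G.erase (frob G) := by
    intro s hs
    rw [Finset.mem_sdiff, Finset.mem_Icc] at hs
    obtain ⟨⟨h1, h2⟩, h3⟩ := hs
    have hsF : s < frob G := lt_of_le_of_ne h2 (fun h => h3 (h ▸ hFmem))
    rcases hadd (frob G) hFmem s ((frob G) - s) (by omega) (by omega) (by omega) with h | h
    · exact absurd h h3
    · exact Finset.mem_erase.mpr ⟨by omega, h⟩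
  have hinj : Set.InjOn (fun s => (frob G) - s) ↑(Finset.Icc 1 (frob G) \ G) := by
    intro x hx y hy hxy
    simp only [Finset.coe_sdiff, Set.mem_diff, Finset.mem_coe, Finset.mem_Icc] at hx hy
    simp only at hxy
    omega
  have hcard2 := Finset.card_le_card_of_injOn _ hmap hinj
  have hsd : (Finset.Icc 1 (frob G) \ G).card = (frob G) - G.card := by
    rw [Finset.card_sdiff_of_subset hsub, Nat.card_Icc]; omega
  have herase : (G.erase (frob G)).card = G.card - 1 := Finset.card_erase_of_mem hFmem
  have hGF : G.card ≤ frob G := by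
    have := Finset.card_le_card hsub
    simpa [Nat.card_Icc] using this
  -- depth bound: (frob G) < 3 * mult G
  have hdepth : (frob G) + mult G < 4 * mult G := by
    unfold depth at hq
    exact (Nat.div_lt_iff_lt_mul hmpos).mp (by omega)
  have hbF : b ≤ frob G := hFub b hbG
  omega
end

section
/- Let n be a positive integer. No pure (2n)-sparse gapset with genus g = 3n+1 is pseudo-symmetric. -/
theorem stmt14 (n : ℕ) (hn : 0 < n) (G : Finset ℕ) (hG : IsGapset G)
    (hps : PureSparse (2 * n) G) (hcard : G.card = 3 * n + 1) :
    frob G ≠ 2 * (3 * n + 1) - 2 := by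
  intro hF
  have hF6 : G.sup id = 6 * n := by
    have h : frob G = 6 * n := by omega
    simpa [frob] using h
  have h0 : (0 : ℕ) ∉ G := hG.1
  have hle : ∀ g ∈ G, g ≤ 6 * n := by
    intro g hg
    have := Finset.le_sup (f := id) hg
    simp only [id] at this
    omega
  have hpos : ∀ g ∈ G, 0 < g := by
    intro g hg
    rcases Nat.eq_zero_or_pos g with h | h
    · exact absurd (h ▸ hg) h0
    · exact h
  have hne : G.Nonempty := Finset.card_pos.mp (by omega)
  have hmax : 6 * n ∈ G := by
    obtain ⟨g, hg, hgs⟩ := Finset.exists_mem_eq_sup G hne id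
    have : g = 6 * n := by simp only [id] at hgs; omega
    exact this ▸ hg
  -- complement is closed under addition
  have Sadd : ∀ x y : ℕ, x ∉ G → y ∉ G → x + y ∉ G := by
    intro x y hx hy hxy
    rcases Nat.eq_zero_or_pos x with h | h
    · subst h; simp at hxy; exact hy hxy
    rcases Nat.eq_zero_or_pos y with h' | h'
    · subst h'; simp at hxy; exact hx hxy
    rcases hG.2 _ hxy x y h h' rfl with hh | hh
    · exact hx hh
    · exact hy hh
  have h3n : 3 * n ∈ G := by
    by_contra h3
    have := Sadd _ _ h3 h3
    rw [show 3 * n + 3 * n = 6 * n by ring] at this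
    exact this hmax
  -- easy pairing direction
  have pairS : ∀ x : ℕ, x ≤ 6 * n → x ∉ G → 6 * n - x ∈ G := by
    intro x hx hxG
    by_contra h2
    have := Sadd _ _ hxG h2
    rw [show x + (6 * n - x) = 6 * n by omega] at this
    exact this hmax
  -- hard pairing direction (counting)
  have key : ∀ g ∈ G, g ≠ 3 * n → 6 * n - g ∉ G := by
    have hcard' : (G.erase (3 * n)).card = 3 * n := by
      rw [Finset.card_erase_of_mem h3n, hcard]
      omega
    have hmaps : ∀ g ∈ G.erase (3 * n), min g (6 * n - g) ∈ Finset.range (3 * n) := by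
      intro g hg
      obtain ⟨hg3, hgG⟩ := Finset.mem_erase.mp hg
      have := hle g hgG
      have := hpos g hgG
      simp only [Finset.mem_range]
      omega
    have hsurj : ∀ x ∈ Finset.range (3 * n),
        ∃ g, ∃ _ : g ∈ G.erase (3 * n), min g (6 * n - g) = x := by
      intro x hx
      have hx' := Finset.mem_range.mp hx
      by_cases hxG : x ∈ G
      · exact ⟨x, Finset.mem_erase.mpr ⟨by omega, hxG⟩, by omega⟩
      · have h2 : 6 * n - x ∈ G := pairS x (by omega) hxG
        exact ⟨6 * n - x, Finset.mem_erase.mpr ⟨by omega, h2⟩, by omega⟩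
    have hinj := Finset.inj_on_of_surj_on_of_card_le
      (s := G.erase (3 * n)) (t := Finset.range (3 * n))
      (fun a _ => min a (6 * n - a)) hmaps hsurj
      (by rw [hcard', Finset.card_range])
    intro g hg hg3 hcontra
    have hgle := hle g hg
    have h1 : g ∈ G.erase (3 * n) := Finset.mem_erase.mpr ⟨hg3, hg⟩
    have h2 : 6 * n - g ∈ G.erase (3 * n) := Finset.mem_erase.mpr ⟨by omega, hcontra⟩
    have := hinj h1 h2 (by omega)
    omega
  -- the sparse pair
  obtain ⟨a, b, ⟨haG, hbG, hab, hcons⟩, hdiff⟩ := hps.2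
  have hb : b = a + 2 * n := by omega
  have hble := hle b hbG
  have hapos := hpos a haG
  have gap : ∀ y, a < y → y < b → y ∉ G := by
    intro y h1 h2 hy
    rcases hcons y hy with h | h <;> omega
  -- the reflected interval of gaps
  have I_sub : ∀ w, 4 * n - a + 1 ≤ w → w ≤ 6 * n - a - 1 → w ∈ G := by
    intro w hw1 hw2
    have hy : 6 * n - w ∉ G := gap _ (by omega) (by omega)
    have := pairS (6 * n - w) (by omega) hy
    rwa [show 6 * n - (6 * n - w) = w by omega] at this
  by_cases hc1 : a ≤ n
  · set w := max (4 * n - a + 1) (2 * a + 2) with hw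
    have hwG : w ∈ G := I_sub w (le_max_left _ _) (by omega)
    set x := min (a + 2 * n - 1) (w - a - 1) with hx
    have hxg : x ∉ G := gap _ (by omega) (by omega)
    have hyg : w - x ∉ G := gap _ (by omega) (by omega)
    have := Sadd _ _ hxg hyg
    rw [show x + (w - x) = w by omega] at this
    exact this hwG
  by_cases hc2 : a ≤ 3 * n - 1
  · set w := max (a + 1) (4 * n - a + 1) with hw
    have hwG : w ∈ G := I_sub w (le_max_right _ _) (by omega)
    exact gap w (by omega) (by omega) hwG
  by_cases hc3 : a = 3 * n
  · have hnG : n ∉ G := by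
      have := key b hbG (by omega)
      rwa [show 6 * n - b = n by omega] at this
    have h2n : 2 * n ∉ G := by
      have := Sadd n n hnG hnG
      rwa [show n + n = 2 * n by ring] at this
    exact h2n (I_sub (2 * n) (by omega) (by omega))
  by_cases hc4 : a ≤ 4 * n - 1
  · have h4na : 4 * n - a ∉ G := by
      have := key b hbG (by omega)
      rwa [show 6 * n - b = 4 * n - a by omega] at this
    have := Sadd _ _ h4na h4na
    rw [show 4 * n - a + (4 * n - a) = 8 * n - 2 * a by omega] at this
    exact this (I_sub _ (by omega) (by omega))
  · have ha4n : a = 4 * n := by omega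
    have h2nS : 2 * n ∉ G := by
      have := key a haG (by omega)
      rwa [show 6 * n - a = 2 * n by omega] at this
    have := Sadd _ _ h2nS h2nS
    rw [show 2 * n + 2 * n = 4 * n by omega] at this
    exact this (ha4n ▸ haG)
end

section
/- Let n be a positive integer and G a pure (2n)-sparse symmetric gapset with genus g = 3n+1 and multiplicity m. Then the largest element of G is 3m+1, the second largest element is 2m+1, and m+1 ∈ G. -/
theorem stmt15 (n : ℕ) (hn : 0 < n) (G : Finset ℕ) (hG : IsGapset G)
    (hps : PureSparse (2 * n) G) (hcard : G.card = 3 * n + 1)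
    (hsym : frob G = 2 * (3 * n + 1) - 1) :
    frob G = 3 * mult G + 1 ∧ (G.erase (3 * mult G + 1)).sup id = 2 * mult G + 1 ∧
      mult G + 1 ∈ G := by
  obtain ⟨h0, hgap⟩ := hG
  set F := frob G with hF
  have hFval : F = 6 * n + 1 := by omega
  -- G is nonempty, F ∈ G, all elements ≤ F
  have hGne : G.Nonempty := by
    rw [← Finset.card_pos, hcard]; omega
  have hle : ∀ x ∈ G, x ≤ F := fun x hx => Finset.le_sup (f := id) hx
  have hFmem : F ∈ G := by
    obtain ⟨b, hb, hbe⟩ := Finset.exists_mem_eq_sup G hGne id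
    rw [hF, frob, hbe]; exact hb
  -- facts about m = mult G
  set m := mult G with hm
  have hmne : {s : ℕ | 0 < s ∧ s ∉ G}.Nonempty := by
    refine ⟨F + 1, by simp, fun h => ?_⟩
    have := hle _ h; omega
  have hmmem : 0 < m ∧ m ∉ G := Nat.sInf_mem hmne
  have hmlow : ∀ j : ℕ, 0 < j → j < m → j ∈ G := by
    intro j hj hjm
    by_contra h
    have : m ≤ j := Nat.sInf_le ⟨hj, h⟩
    omega
  -- pairs: for x ≤ F, x ∈ G or F - x ∈ G
  have hpair : ∀ x, x ≤ F → x ∈ G ∨ F - x ∈ G := by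
    intro x hx
    rcases Nat.eq_or_lt_of_le hx with h | h
    · left; rw [h]; exact hFmem
    rcases Nat.eq_zero_or_pos x with h0x | h0x
    · right; rw [h0x, Nat.sub_zero]; exact hFmem
    · exact hgap F hFmem x (F - x) h0x (by omega) (by omega)
  -- counting: the complement maps onto G via x ↦ F - x, giving full symmetry
  have hsubset : G ⊆ Finset.range (F + 1) := fun x hx =>
    Finset.mem_range.mpr (by have := hle x hx; omega)
  set C := Finset.range (F + 1) \ G with hC
  have hCcard : C.card = 3 * n + 1 := by
    rw [hC, Finset.card_sdiff_of_subset hsubset, Finset.card_range, hcard]; omega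
  have himg : C.image (fun x => F - x) = G := by
    apply Finset.eq_of_subset_of_card_le
    · intro y hy
      obtain ⟨x, hx, rfl⟩ := Finset.mem_image.mp hy
      obtain ⟨hxr, hxG⟩ := Finset.mem_sdiff.mp hx
      have hxF : x ≤ F := by have := Finset.mem_range.mp hxr; omega
      rcases hpair x hxF with h | h
      · exact absurd h hxG
      · exact h
    · rw [Finset.card_image_of_injOn, hCcard, hcard]
      intro x hx y hy hxy
      have hx' : x < F + 1 := Finset.mem_range.mp (Finset.mem_sdiff.mp hx).1
      have hy' : y < F + 1 := Finset.mem_range.mp (Finset.mem_sdiff.mp hy).1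
      simp only at hxy
      omega
  have hsymm : ∀ x ∈ G, F - x ∉ G := by
    intro x hx hFx
    have hxF : x ≤ F := hle x hx
    have : x ∈ C.image (fun x => F - x) := himg ▸ hx
    obtain ⟨c, hc, hcx⟩ := Finset.mem_image.mp this
    have hc' : c < F + 1 := Finset.mem_range.mp (Finset.mem_sdiff.mp hc).1
    have hcG : c ∉ G := (Finset.mem_sdiff.mp hc).2
    have : c = F - x := by omega
    exact hcG (this ▸ hFx)
  -- the big gap gives m ≥ 2n, and also m ≤ F
  obtain ⟨hκ, a, b, ⟨haG, hbG, hab, hconsec⟩, habd⟩ := hps.imp id id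
  have ha1 : a + 1 ∉ G := by
    intro h
    rcases hconsec (a + 1) h with h' | h' <;> omega
  have hmF : m ≤ F := by
    have : m ≤ a + 1 := Nat.sInf_le ⟨by omega, ha1⟩
    have := hle b hbG
    omega
  have hmlb : 2 * n ≤ m := by
    -- b > m since otherwise a+1 < m would be a gap below m
    have hbm : m < b := by
      rcases Nat.lt_trichotomy b m with h | h | h
      · exact absurd (hmlow (a + 1) (by omega) (by omega)) ha1
      · exact absurd (h ▸ hbG) hmmem.2
      · exact h
    have hsub : b - m ∈ G := by
      rcases hgap b hbG m (b - m) hmmem.1 (by omega) (by omega) with h | h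
      · exact absurd h hmmem.2
      · exact h
    rcases hconsec (b - m) hsub with h | h <;> omega
  -- Consec (F - m) F, hence m ≤ 2n
  have hFmG : F - m ∈ G := by
    rcases hpair (F - m) (by omega) with h | h
    · exact h
    · rw [show F - (F - m) = m by omega] at h
      exact absurd h hmmem.2
  have hconsFm : Consec G (F - m) F := by
    refine ⟨hFmG, hFmem, by omega, ?_⟩
    intro c hc
    by_contra hcon
    push_neg at hcon
    have hcF : c ≤ F := hle c hc
    have hj : F - c ∈ G := hmlow (F - c) (by omega) (by omega)
    have := hsymm (F - c) hj
    rw [show F - (F - c) = c by omega] at this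
    exact this hc
  have hmub : m ≤ 2 * n := by
    have := hκ (F - m) F hconsFm
    omega
  have hmval : m = 2 * n := by omega
  -- put everything together
  refine ⟨by omega, ?_, ?_⟩
  · -- second largest element
    apply le_antisymm
    · apply Finset.sup_le
      intro x hx
      obtain ⟨hxF, hxG⟩ := Finset.mem_erase.mp hx
      have hxle : x ≤ F := hle x hxG
      simp only [id]
      by_contra hcon
      push_neg at hcon
      have hxF' : x < F := by omega
      have hj : F - x ∈ G := hmlow (F - x) (by omega) (by omega)
      have := hsymm (F - x) hj
      rw [show F - (F - x) = x by omega] at this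
      exact this hxG
    · have : 2 * m + 1 ∈ G.erase (3 * m + 1) := by
        refine Finset.mem_erase.mpr ⟨by omega, ?_⟩
        rw [show 2 * m + 1 = F - m by omega]
        exact hFmG
      exact Finset.le_sup (f := id) this
  · -- m + 1 ∈ G
    have h4n : 4 * n ∉ G := by
      intro h
      rcases hgap (4 * n) h (2 * n) (2 * n) (by omega) (by omega) (by omega) with h' | h' <;>
        exact hmmem.2 (hmval ▸ h')
    rcases hgap F hFmem (2 * n + 1) (4 * n) (by omega) (by omega) (by omega) with h | h
    · rw [hmval]; exact h
    · exact absurd h h4n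
end

section
/- For each positive integer n, the number of symmetric pure (2n)-sparse gapsets with genus 3n+1 is exactly 2^{n-1}. -/
/-- The gapset determined by a choice set `T ⊆ [2n+2, 3n]`. -/
def Phi (n : ℕ) (T : Finset ℕ) : Finset ℕ :=
  Finset.Icc 1 (2 * n - 1) ∪ {2 * n + 1} ∪ T ∪
    (Finset.Icc (2 * n + 2) (3 * n) \ T).image (fun y => 6 * n + 1 - y) ∪
    {4 * n + 1, 6 * n + 1}

lemma mem_Phi {n : ℕ} {T : Finset ℕ} {x : ℕ} :
    x ∈ Phi n T ↔ (1 ≤ x ∧ x ≤ 2 * n - 1) ∨ x = 2 * n + 1 ∨ x ∈ T ∨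
      (∃ y, (2 * n + 2 ≤ y ∧ y ≤ 3 * n) ∧ y ∉ T ∧ 6 * n + 1 - y = x) ∨
      x = 4 * n + 1 ∨ x = 6 * n + 1 := by
  simp only [Phi, Finset.mem_union, Finset.mem_Icc, Finset.mem_singleton,
    Finset.mem_image, Finset.mem_sdiff, Finset.mem_insert]
  constructor
  · rintro ((((h | h) | h) | ⟨y, ⟨⟨ha, hb⟩, hc⟩, hd⟩) | h | h)
    · exact Or.inl h
    · exact Or.inr (Or.inl h)
    · exact Or.inr (Or.inr (Or.inl h))
    · exact Or.inr (Or.inr (Or.inr (Or.inl ⟨y, ⟨ha, hb⟩, hc, hd⟩)))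
    · exact Or.inr (Or.inr (Or.inr (Or.inr (Or.inl h))))
    · exact Or.inr (Or.inr (Or.inr (Or.inr (Or.inr h))))
  · rintro (h | h | h | ⟨y, ⟨ha, hb⟩, hc, hd⟩ | h | h)
    · exact Or.inl (Or.inl (Or.inl (Or.inl h)))
    · exact Or.inl (Or.inl (Or.inl (Or.inr h)))
    · exact Or.inl (Or.inl (Or.inr h))
    · exact Or.inl (Or.inr ⟨y, ⟨⟨ha, hb⟩, hc⟩, hd⟩)
    · exact Or.inr (Or.inl h)
    · exact Or.inr (Or.inr h)

lemma Phi_upper {n : ℕ} {T : Finset ℕ} (hT : T ⊆ Finset.Icc (2 * n + 2) (3 * n))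
    {x : ℕ} (hx : x ∈ Phi n T) : 1 ≤ x ∧ x ≤ 6 * n + 1 := by
  rcases mem_Phi.mp hx with h | h | h | ⟨y, ⟨hy1, hy2⟩, _, hy3⟩ | h | h
  · omega
  · omega
  · have := Finset.mem_Icc.mp (hT h); omega
  · omega
  · omega
  · omega

lemma Phi_gapset {n : ℕ} (hn : 0 < n) {T : Finset ℕ}
    (hT : T ⊆ Finset.Icc (2 * n + 2) (3 * n)) : IsGapset (Phi n T) := by
  constructor
  · intro h
    have := (Phi_upper hT h).1
    omega
  · have key : ∀ z ∈ Phi n T, ∀ x y : ℕ, 0 < x → x ≤ y → z = x + y →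
        x ∈ Phi n T ∨ y ∈ Phi n T := by
      intro z hz x y hx hxy hzxy
      have hzT : z ∈ T → 2 * n + 2 ≤ z ∧ z ≤ 3 * n := fun h =>
        Finset.mem_Icc.mp (hT h)
      rcases mem_Phi.mp hz with h | h | h | ⟨w, ⟨hw1, hw2⟩, hwT, hw3⟩ | h | h
      · exact Or.inl (mem_Phi.mpr (Or.inl ⟨by omega, by omega⟩))
      · exact Or.inl (mem_Phi.mpr (Or.inl ⟨by omega, by omega⟩))
      · have := hzT h
        exact Or.inl (mem_Phi.mpr (Or.inl ⟨by omega, by omega⟩))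
      · exact Or.inl (mem_Phi.mpr (Or.inl ⟨by omega, by omega⟩))
      · -- z = 4n+1
        by_cases h2 : x = 2 * n
        · refine Or.inr (mem_Phi.mpr (Or.inr (Or.inl ?_)))
          omega
        · exact Or.inl (mem_Phi.mpr (Or.inl ⟨by omega, by omega⟩))
      · -- z = 6n+1
        by_cases h1 : x ≤ 2 * n - 1
        · exact Or.inl (mem_Phi.mpr (Or.inl ⟨by omega, by omega⟩))
        by_cases h2 : x = 2 * n
        · exact Or.inr (mem_Phi.mpr (by omega))
        by_cases h3 : x = 2 * n + 1
        · exact Or.inl (mem_Phi.mpr (Or.inr (Or.inl h3)))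
        have hx3 : 2 * n + 2 ≤ x ∧ x ≤ 3 * n := by omega
        by_cases h4 : x ∈ T
        · exact Or.inl (mem_Phi.mpr (Or.inr (Or.inr (Or.inl h4))))
        · refine Or.inr (mem_Phi.mpr (Or.inr (Or.inr (Or.inr (Or.inl
            ⟨x, ⟨hx3.1, hx3.2⟩, h4, by omega⟩)))))
    intro z hz x y hx hy hzxy
    rcases le_total x y with h | h
    · exact key z hz x y hx h hzxy
    · exact (key z hz y x hy h (by omega)).symm

lemma Phi_sparse {n : ℕ} (hn : 0 < n) {T : Finset ℕ}
    (hT : T ⊆ Finset.Icc (2 * n + 2) (3 * n)) : PureSparse (2 * n) (Phi n T) := by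
  have hmem : ∀ x ∈ Phi n T,
      (1 ≤ x ∧ x ≤ 2 * n - 1) ∨ x = 2 * n + 1 ∨ (2 * n + 2 ≤ x ∧ x ≤ 4 * n - 1) ∨
        x = 4 * n + 1 ∨ x = 6 * n + 1 := by
    intro x hx
    rcases mem_Phi.mp hx with h | h | h | ⟨y, ⟨hy1, hy2⟩, _, hy3⟩ | h | h
    · omega
    · omega
    · have := Finset.mem_Icc.mp (hT h); omega
    · omega
    · omega
    · omega
  constructor
  · intro a b hab
    obtain ⟨haG, hbG, haltb, hbtw⟩ := hab
    -- find c ∈ Phi with a < c and c ≤ a + 2n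
    have hb6 : b ≤ 6 * n + 1 := (Phi_upper hT hbG).2
    obtain ⟨c, hcG, hac, hca⟩ : ∃ c ∈ Phi n T, a < c ∧ c ≤ a + 2 * n := by
      rcases hmem a haG with h | h | h | h | h
      · by_cases h2 : a ≤ 2 * n - 2
        · exact ⟨a + 1, mem_Phi.mpr (Or.inl ⟨by omega, by omega⟩), by omega, by omega⟩
        · exact ⟨2 * n + 1, mem_Phi.mpr (Or.inr (Or.inl rfl)), by omega, by omega⟩
      · exact ⟨4 * n + 1, mem_Phi.mpr (by omega), by omega, by omega⟩
      · exact ⟨4 * n + 1, mem_Phi.mpr (by omega), by omega, by omega⟩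
      · exact ⟨6 * n + 1, mem_Phi.mpr (by omega), by omega, by omega⟩
      · omega
    rcases hbtw c hcG with h | h
    · omega
    · omega
  · refine ⟨4 * n + 1, 6 * n + 1, ⟨mem_Phi.mpr (by omega), mem_Phi.mpr (by omega),
      by omega, ?_⟩, by omega⟩
    intro c hc
    rcases hmem c hc with h | h | h | h | h <;> omega

lemma Phi_card {n : ℕ} (hn : 0 < n) {T : Finset ℕ}
    (hT : T ⊆ Finset.Icc (2 * n + 2) (3 * n)) : (Phi n T).card = 3 * n + 1 := by
  have hTb : ∀ x ∈ T, 2 * n + 2 ≤ x ∧ x ≤ 3 * n := fun x hx =>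
    Finset.mem_Icc.mp (hT hx)
  have htcard : T.card ≤ n - 1 := by
    have := Finset.card_le_card hT
    rwa [Nat.card_Icc, show 3 * n + 1 - (2 * n + 2) = n - 1 by omega] at this
  set D := (Finset.Icc (2 * n + 2) (3 * n) \ T).image (fun y => 6 * n + 1 - y) with hD
  have hDcard : D.card = n - 1 - T.card := by
    rw [hD, Finset.card_image_of_injOn, Finset.card_sdiff_of_subset hT, Nat.card_Icc]
    · congr 1; omega
    · intro a ha b hb hab
      simp only [Finset.mem_coe, Finset.mem_sdiff, Finset.mem_Icc] at ha hb
      dsimp only at hab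
      omega
  have hDb : ∀ x ∈ D, 3 * n + 1 ≤ x ∧ x ≤ 4 * n - 1 := by
    intro x hx
    rw [hD] at hx
    obtain ⟨y, hy, rfl⟩ := Finset.mem_image.mp hx
    simp only [Finset.mem_sdiff, Finset.mem_Icc] at hy
    omega
  have e1 : (Finset.Icc 1 (2 * n - 1) ∪ {2 * n + 1}).card = 2 * n := by
    rw [Finset.card_union_of_disjoint, Nat.card_Icc, Finset.card_singleton]
    · omega
    · simp only [Finset.disjoint_singleton_right, Finset.mem_Icc]
      omega
  have e2 : (Finset.Icc 1 (2 * n - 1) ∪ {2 * n + 1} ∪ T).card = 2 * n + T.card := by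
    rw [Finset.card_union_of_disjoint, e1]
    rw [Finset.disjoint_left]
    intro a ha haT
    have := hTb a haT
    simp only [Finset.mem_union, Finset.mem_Icc, Finset.mem_singleton] at ha
    omega
  have e3 : (Finset.Icc 1 (2 * n - 1) ∪ {2 * n + 1} ∪ T ∪ D).card
      = 2 * n + T.card + (n - 1 - T.card) := by
    rw [Finset.card_union_of_disjoint, e2, hDcard]
    rw [Finset.disjoint_left]
    intro a ha haD
    have := hDb a haD
    simp only [Finset.mem_union, Finset.mem_Icc, Finset.mem_singleton] at ha
    rcases ha with (ha | ha) | ha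
    · omega
    · omega
    · have := hTb a ha; omega
  have : (Phi n T).card = 2 * n + T.card + (n - 1 - T.card) + 2 := by
    rw [Phi, ← hD, Finset.card_union_of_disjoint, e3]
    · rw [show ({4 * n + 1, 6 * n + 1} : Finset ℕ).card = 2 from by
        rw [Finset.card_insert_of_notMem (by simp; omega), Finset.card_singleton]]
    · rw [Finset.disjoint_left]
      intro a ha ha2
      simp only [Finset.mem_insert, Finset.mem_singleton] at ha2
      simp only [Finset.mem_union, Finset.mem_Icc, Finset.mem_singleton] at ha
      rcases ha with ((ha | ha) | ha) | ha
      · omega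
      · omega
      · have := hTb a ha; omega
      · have := hDb a ha; omega
  omega

lemma Phi_frob {n : ℕ} (hn : 0 < n) {T : Finset ℕ}
    (hT : T ⊆ Finset.Icc (2 * n + 2) (3 * n)) : frob (Phi n T) = 6 * n + 1 := by
  unfold frob
  apply le_antisymm
  · exact Finset.sup_le fun x hx => (Phi_upper hT hx).2
  · exact Finset.le_sup (f := id) (mem_Phi.mpr (by omega))

lemma inter_Phi {n : ℕ} (hn : 0 < n) {T : Finset ℕ}
    (hT : T ⊆ Finset.Icc (2 * n + 2) (3 * n)) :
    Phi n T ∩ Finset.Icc (2 * n + 2) (3 * n) = T := by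
  ext x
  simp only [Finset.mem_inter, Finset.mem_Icc]
  constructor
  · rintro ⟨hx, hx1, hx2⟩
    rcases mem_Phi.mp hx with h | h | h | ⟨y, ⟨hy1, hy2⟩, _, hy3⟩ | h | h
    · omega
    · omega
    · exact h
    · omega
    · omega
    · omega
  · intro hx
    have := Finset.mem_Icc.mp (hT hx)
    exact ⟨mem_Phi.mpr (Or.inr (Or.inr (Or.inl hx))), this.1, this.2⟩

lemma backward {n : ℕ} (hn : 0 < n) {G : Finset ℕ} (h1 : IsGapset G)
    (h2 : PureSparse (2 * n) G) (h3 : G.card = 3 * n + 1)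
    (h4 : frob G = 6 * n + 1) :
    ∃ T ⊆ Finset.Icc (2 * n + 2) (3 * n), G = Phi n T := by
  obtain ⟨h0, hadd⟩ := h1
  have hne : G.Nonempty := Finset.card_pos.mp (by omega)
  have hsup : G.sup id = 6 * n + 1 := h4
  have htop : 6 * n + 1 ∈ G := by
    obtain ⟨b, hb, hbe⟩ := Finset.exists_mem_eq_sup G hne id
    have : b = 6 * n + 1 := by rw [← hsup, hbe]; rfl
    rwa [← this]
  have hub : ∀ x ∈ G, x ≤ 6 * n + 1 := by
    intro x hx
    have := Finset.le_sup (f := id) hx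
    rw [hsup] at this
    exact this
  have hpos : ∀ x ∈ G, 1 ≤ x := by
    intro x hx
    rcases Nat.eq_zero_or_pos x with h | h
    · exact absurd (h ▸ hx) h0
    · exact h
  have pair : ∀ x, 1 ≤ x → x ≤ 3 * n → x ∈ G ∨ 6 * n + 1 - x ∈ G := by
    intro x hx1 hx2
    exact hadd (6 * n + 1) htop x (6 * n + 1 - x) (by omega) (by omega) (by omega)
  -- exactly-one via counting
  set f : ℕ → ℕ := fun x => min x (6 * n + 1 - x) with hf
  have hfval : ∀ x, x ≤ 3 * n → f x = x := by
    intro x hx; rw [hf]; simp only []; omega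
  have hfval' : ∀ x, 3 * n + 1 ≤ x → x ≤ 6 * n + 1 → f x = 6 * n + 1 - x := by
    intro x hx1 hx2; rw [hf]; simp only []; omega
  have himg : (G.erase (6 * n + 1)).image f = Finset.Icc 1 (3 * n) := by
    apply Finset.Subset.antisymm
    · intro b hb
      obtain ⟨x, hx, rfl⟩ := Finset.mem_image.mp hb
      have hxG := Finset.mem_of_mem_erase hx
      have hxne := Finset.ne_of_mem_erase hx
      have h6 := hub x hxG
      have h1x := hpos x hxG
      rw [Finset.mem_Icc, hf]
      simp only []
      omega
    · intro b hb
      rw [Finset.mem_Icc] at hb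
      rcases pair b hb.1 hb.2 with h | h
      · refine Finset.mem_image.mpr ⟨b, Finset.mem_erase.mpr ⟨by omega, h⟩, ?_⟩
        exact hfval b hb.2
      · refine Finset.mem_image.mpr
          ⟨6 * n + 1 - b, Finset.mem_erase.mpr ⟨by omega, h⟩, ?_⟩
        rw [hfval' (6 * n + 1 - b) (by omega) (by omega)]
        omega
  have hinj : Set.InjOn f ↑(G.erase (6 * n + 1)) := by
    rw [← Finset.card_image_iff, himg, Nat.card_Icc,
      Finset.card_erase_of_mem htop, h3]
  have notboth : ∀ x, 1 ≤ x → x ≤ 3 * n → ¬(x ∈ G ∧ 6 * n + 1 - x ∈ G) := by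
    rintro x hx1 hx2 ⟨hxG, hxG'⟩
    have m1 : x ∈ G.erase (6 * n + 1) := Finset.mem_erase.mpr ⟨by omega, hxG⟩
    have m2 : 6 * n + 1 - x ∈ G.erase (6 * n + 1) :=
      Finset.mem_erase.mpr ⟨by omega, hxG'⟩
    have e1 : f x = x := hfval x hx2
    have e2 : f (6 * n + 1 - x) = x := by
      rw [hfval' (6 * n + 1 - x) (by omega) (by omega)]; omega
    have := hinj (Finset.mem_coe.mpr m1) (Finset.mem_coe.mpr m2) (by rw [e1, e2])
    omega
  have onlyone : ∀ x, 1 ≤ x → x ≤ 6 * n → (x ∈ G ↔ 6 * n + 1 - x ∉ G) := by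
    intro x hx1 hx2
    rcases le_or_gt x (3 * n) with h | h
    · constructor
      · intro hxG hxG'
        exact notboth x hx1 h ⟨hxG, hxG'⟩
      · intro hxG'
        rcases pair x hx1 h with h' | h'
        · exact h'
        · exact absurd h' hxG'
    · have hx' : 1 ≤ 6 * n + 1 - x ∧ 6 * n + 1 - x ≤ 3 * n := by omega
      constructor
      · intro hxG hxG'
        exact notboth (6 * n + 1 - x) hx'.1 hx'.2 ⟨hxG', by rw [show 6 * n + 1 - (6 * n + 1 - x) = x by omega]; exact hxG⟩
      · intro hxG'
        rcases pair (6 * n + 1 - x) hx'.1 hx'.2 with h' | h'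
        · exact absurd h' hxG'
        · rwa [show 6 * n + 1 - (6 * n + 1 - x) = x by omega] at h'
  have low : ∀ j, 1 ≤ j → j ≤ 2 * n - 1 → j ∈ G := by
    obtain ⟨a, b, ⟨haG, hbG, haltb, hbtw⟩, hdiff⟩ := h2.2
    have ha1 := hpos a haG
    intro j hj1 hj2
    have hbj : b - j ∉ G := by
      intro hmem
      rcases hbtw (b - j) hmem with h | h <;> omega
    rcases hadd b hbG (b - j) j (by omega) (by omega) (by omega) with h | h
    · exact absurd h hbj
    · exact h
  have h2n : 2 * n ∉ G := by
    intro h2nG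
    have hlow2 : ∀ j, 1 ≤ j → j ≤ 2 * n → j ∈ G := by
      intro j hj1 hj2
      rcases Nat.eq_or_lt_of_le hj2 with h | h
      · exact h ▸ h2nG
      · exact low j hj1 (by omega)
    have hhi : ∀ c ∈ G, c ≤ 4 * n ∨ c = 6 * n + 1 := by
      intro c hc
      by_contra hcon
      push_neg at hcon
      have hc6 := hub c hc
      have hx : 6 * n + 1 - c ∈ G := hlow2 (6 * n + 1 - c) (by omega) (by omega)
      exact notboth (6 * n + 1 - c) (by omega) (by omega)
        ⟨hx, by rw [show 6 * n + 1 - (6 * n + 1 - c) = c by omega]; exact hc⟩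
    have hene : (G.erase (6 * n + 1)).Nonempty := by
      rw [← Finset.card_pos, Finset.card_erase_of_mem htop, h3]
      omega
    set a := (G.erase (6 * n + 1)).max' hene with ha
    have haG : a ∈ G := Finset.mem_of_mem_erase ((G.erase (6 * n + 1)).max'_mem hene)
    have hane : a ≠ 6 * n + 1 := Finset.ne_of_mem_erase ((G.erase (6 * n + 1)).max'_mem hene)
    have ha4 : a ≤ 4 * n := by
      rcases hhi a haG with h | h
      · exact h
      · exact absurd h hane
    have hcons : Consec G a (6 * n + 1) := by
      refine ⟨haG, htop, by omega, ?_⟩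
      intro c hc
      by_cases hc6 : c = 6 * n + 1
      · omega
      · exact Or.inl (Finset.le_max' _ c (Finset.mem_erase.mpr ⟨hc6, hc⟩))
    have := h2.1 a (6 * n + 1) hcons
    omega
  have h4n1 : 4 * n + 1 ∈ G := by
    have := onlyone (2 * n) (by omega) (by omega)
    rw [show 6 * n + 1 - 2 * n = 4 * n + 1 by omega] at this
    by_contra h
    exact h2n (this.mpr h)
  have h4n : 4 * n ∉ G := by
    intro h
    rcases hadd (4 * n) h (2 * n) (2 * n) (by omega) (by omega) (by omega) with
      h' | h' <;> exact h2n h'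
  have h2n1 : 2 * n + 1 ∈ G := by
    have := onlyone (2 * n + 1) (by omega) (by omega)
    rw [show 6 * n + 1 - (2 * n + 1) = 4 * n by omega] at this
    exact this.mpr h4n
  have hmid : ∀ c, 4 * n + 2 ≤ c → c ≤ 6 * n → c ∉ G := by
    intro c hc1 hc2 hc
    have hx : 6 * n + 1 - c ∈ G := low (6 * n + 1 - c) (by omega) (by omega)
    exact notboth (6 * n + 1 - c) (by omega) (by omega)
      ⟨hx, by rw [show 6 * n + 1 - (6 * n + 1 - c) = c by omega]; exact hc⟩
  refine ⟨G.filter (fun x => 2 * n + 2 ≤ x ∧ x ≤ 3 * n), ?_, ?_⟩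
  · intro x hx
    rw [Finset.mem_filter] at hx
    exact Finset.mem_Icc.mpr hx.2
  · set T := G.filter (fun x => 2 * n + 2 ≤ x ∧ x ≤ 3 * n) with hTdef
    have hTmem : ∀ x, x ∈ T ↔ x ∈ G ∧ 2 * n + 2 ≤ x ∧ x ≤ 3 * n := by
      intro x; rw [hTdef, Finset.mem_filter]
    ext x
    constructor
    · intro hx
      have hx1 := hpos x hx
      have hx6 := hub x hx
      apply mem_Phi.mpr
      by_cases hA : x ≤ 2 * n - 1
      · exact Or.inl ⟨hx1, hA⟩
      by_cases hB : x = 2 * n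
      · exact absurd (hB ▸ hx) h2n
      by_cases hC : x = 2 * n + 1
      · exact Or.inr (Or.inl hC)
      by_cases hD : x ≤ 3 * n
      · exact Or.inr (Or.inr (Or.inl ((hTmem x).mpr ⟨hx, by omega, hD⟩)))
      by_cases hE : x ≤ 4 * n - 1
      · refine Or.inr (Or.inr (Or.inr (Or.inl ⟨6 * n + 1 - x, ⟨by omega, by omega⟩, ?_, by omega⟩)))
        intro hmem
        have := ((hTmem _).mp hmem).1
        exact notboth (6 * n + 1 - x) (by omega) (by omega)
          ⟨this, by rw [show 6 * n + 1 - (6 * n + 1 - x) = x by omega]; exact hx⟩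
      by_cases hF : x = 4 * n
      · exact absurd (hF ▸ hx) h4n
      by_cases hG' : x = 4 * n + 1
      · exact Or.inr (Or.inr (Or.inr (Or.inr (Or.inl hG'))))
      by_cases hH : x ≤ 6 * n
      · exact absurd hx (hmid x (by omega) hH)
      · exact Or.inr (Or.inr (Or.inr (Or.inr (Or.inr (by omega)))))
    · intro hx
      rcases mem_Phi.mp hx with h | h | h | ⟨y, ⟨hy1, hy2⟩, hyT, hy3⟩ | h | h
      · exact low x h.1 h.2
      · exact h ▸ h2n1
      · exact ((hTmem x).mp h).1
      · have hyG : y ∉ G := fun hyG => hyT ((hTmem y).mpr ⟨hyG, hy1, hy2⟩)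
        rcases pair y (by omega) hy2 with h' | h'
        · exact absurd h' hyG
        · rwa [hy3] at h'
      · exact h ▸ h4n1
      · exact h ▸ htop

theorem stmt16 (n : ℕ) (hn : 0 < n) :
    {G : Finset ℕ | IsGapset G ∧ PureSparse (2 * n) G ∧ G.card = 3 * n + 1 ∧
      frob G = 2 * (3 * n + 1) - 1}.ncard = 2 ^ (n - 1) := by
  have hfr : 2 * (3 * n + 1) - 1 = 6 * n + 1 := by omega
  have hset : {G : Finset ℕ | IsGapset G ∧ PureSparse (2 * n) G ∧ G.card = 3 * n + 1 ∧
      frob G = 2 * (3 * n + 1) - 1}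
      = Phi n '' {T : Finset ℕ | T ⊆ Finset.Icc (2 * n + 2) (3 * n)} := by
    ext G
    simp only [Set.mem_setOf_eq, Set.mem_image]
    constructor
    · rintro ⟨hg, hs, hc, hf⟩
      obtain ⟨T, hT, hGT⟩ := backward hn hg hs hc (by omega)
      exact ⟨T, hT, hGT.symm⟩
    · rintro ⟨T, hT, rfl⟩
      exact ⟨Phi_gapset hn hT, Phi_sparse hn hT, Phi_card hn hT, by
        rw [Phi_frob hn hT]; omega⟩
  rw [hset]
  rw [Set.ncard_image_of_injOn (by
    intro T1 h1 T2 h2 heq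
    have e1 := inter_Phi hn h1
    have e2 := inter_Phi hn h2
    rw [← e1, ← e2, heq])]
  have : {T : Finset ℕ | T ⊆ Finset.Icc (2 * n + 2) (3 * n)}
      = ↑((Finset.Icc (2 * n + 2) (3 * n)).powerset) := by
    ext T
    rw [Set.mem_setOf_eq, Finset.mem_coe, Finset.mem_powerset]
  rw [this, Set.ncard_coe_finset, Finset.card_powerset, Nat.card_Icc]
  congr 1
  omega
end

section
/- Let n ≥ 2 and let G = {ℓ₁ < ... < ℓ_g} be a pure (2n+1)-sparse gapset with genus g = 3n+2. Then there is a unique index α ∈ [1, g-1] with ℓ_{α+1} - ℓ_α = 2n+1. -/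
theorem stmt17 (n : ℕ) (hn : 2 ≤ n) (G : Finset ℕ) (hG : IsGapset G)
    (hps : PureSparse (2 * n + 1) G) (hcard : G.card = 3 * n + 2) :
    ∃! p : ℕ × ℕ, Consec G p.1 p.2 ∧ p.2 - p.1 = 2 * n + 1 := by
  obtain ⟨hG0, hGadd⟩ := hG
  obtain ⟨-, a, b, hab, hd⟩ := hps
  have hne : G.Nonempty := Finset.card_pos.mp (by omega)
  obtain ⟨F, hFG, hFsup⟩ := Finset.exists_mem_eq_sup G hne id
  have hle : ∀ x ∈ G, x ≤ F := fun x hx =>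
    le_of_le_of_eq (Finset.le_sup (f := id) hx) hFsup
  have hpos : ∀ x ∈ G, 1 ≤ x := fun x hx =>
    Nat.one_le_iff_ne_zero.mpr (fun h => hG0 (h ▸ hx))
  have hsub : G ⊆ Finset.Icc 1 F := fun x hx =>
    Finset.mem_Icc.mpr ⟨hpos x hx, hle x hx⟩
  have hFb : F ≤ 2 * G.card - 1 := by
    have h1 : Finset.Icc 1 (F - 1) ⊆ (G.erase F) ∪ (G.erase F).image (fun x => F - x) := by
      intro x hx
      rw [Finset.mem_Icc] at hx
      have hF1 : 1 ≤ F := hpos F hFG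
      by_cases hxG : x ∈ G
      · exact Finset.mem_union_left _ (Finset.mem_erase.mpr ⟨by omega, hxG⟩)
      · rcases hGadd F hFG x (F - x) (by omega) (by omega) (by omega) with h | h
        · exact absurd h hxG
        · exact Finset.mem_union_right _ (Finset.mem_image.mpr
            ⟨F - x, Finset.mem_erase.mpr ⟨by omega, h⟩, by omega⟩)
    have h2 := Finset.card_le_card h1
    have h3 := Finset.card_union_le (G.erase F) ((G.erase F).image (fun x => F - x))
    have h4 := Finset.card_image_le (s := G.erase F) (f := fun x => F - x)
    have h5 : (G.erase F).card = G.card - 1 := Finset.card_erase_of_mem hFG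
    rw [Nat.card_Icc] at h2
    omega
  have key : ∀ a b a' b', Consec G a b → b - a = 2 * n + 1 → Consec G a' b' →
      b' - a' = 2 * n + 1 → a < a' → False := by
    intro a b a' b' h1 hd1 h2 hd2 hlt
    obtain ⟨haG, hbG, haltb, hcons⟩ := h1
    obtain ⟨haG', hbG', haltb', hcons'⟩ := h2
    have hba' : b ≤ a' := (hcons a' haG').resolve_left (by omega)
    have hsub2 : Finset.Ioo a b ∪ Finset.Ioo a' b' ⊆ Finset.Icc 1 F \ G := by
      intro x hx
      rw [Finset.mem_union, Finset.mem_Ioo, Finset.mem_Ioo] at hx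
      rw [Finset.mem_sdiff, Finset.mem_Icc]
      rcases hx with hx | hx
      · refine ⟨⟨by have := hpos a haG; omega, by have := hle b hbG; omega⟩, fun hxG => ?_⟩
        rcases hcons x hxG with h | h <;> omega
      · refine ⟨⟨by have := hpos a' haG'; omega, by have := hle b' hbG'; omega⟩, fun hxG => ?_⟩
        rcases hcons' x hxG with h | h <;> omega
    have hdisj : Disjoint (Finset.Ioo a b) (Finset.Ioo a' b') := by
      rw [Finset.disjoint_left]
      intro x hx hx'
      rw [Finset.mem_Ioo] at hx hx'
      omega
    have hc1 := Finset.card_le_card hsub2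
    rw [Finset.card_union_of_disjoint hdisj, Finset.card_sdiff_of_subset hsub,
      Nat.card_Ioo, Nat.card_Ioo, Nat.card_Icc] at hc1
    omega
  refine ⟨(a, b), ⟨hab, hd⟩, ?_⟩
  rintro ⟨a', b'⟩ ⟨hab', hd'⟩
  rcases lt_trichotomy a' a with h | h | h
  · exact (key a' b' a b hab' hd' hab hd h).elim
  · have hb : b' = b := by
      obtain ⟨_, hbG, hlt1, hcons1⟩ := hab
      obtain ⟨_, hbG', hlt1', hcons1'⟩ := hab'
      rcases hcons1 b' hbG' with h2 | h2
      · omega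
      · rcases hcons1' b hbG with h3 | h3 <;> omega
    rw [Prod.mk.injEq]
    exact ⟨h, hb⟩
  · exact (key a b a' b' hab hd hab' hd' h).elim
end

section
/- Let n be a positive integer. No pure (2n+1)-sparse gapset with genus g = 3n+2 is symmetric; moreover every such gapset has depth at most 3, and if it is pseudo-symmetric then its depth equals 3 and its multiplicity equals 2n+1. -/
theorem stmt18 (n : ℕ) (hn : 0 < n) (G : Finset ℕ) (hG : IsGapset G)
    (hps : PureSparse (2 * n + 1) G) (hcard : G.card = 3 * n + 2) :
    frob G ≠ 2 * (3 * n + 2) - 1 ∧ depth G ≤ 3 ∧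
      (frob G = 2 * (3 * n + 2) - 2 → depth G = 3 ∧ mult G = 2 * n + 1) := by
  classical
  set F := frob G with hFdef
  set m := mult G with hmdef
  have hne : G.Nonempty := by
    rw [← Finset.card_pos, hcard]; omega
  have hFmem : F ∈ G := by
    obtain ⟨b, hb, hsup⟩ := Finset.exists_mem_eq_sup G hne id
    rw [hFdef, frob, hsup]; exact hb
  have hleF : ∀ z ∈ G, z ≤ F := fun z hz => Finset.le_sup (f := id) hz
  have h0 : (0:ℕ) ∉ G := hG.1
  have hcl : ∀ u v : ℕ, u ∉ G → v ∉ G → u + v ∉ G := by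
    intro u v hu hv hmem
    rcases Nat.eq_zero_or_pos u with h | h
    · subst h; simp at hmem; exact hv hmem
    rcases Nat.eq_zero_or_pos v with h' | h'
    · subst h'; simp at hmem; exact hu hmem
    rcases hG.2 _ hmem u v h h' rfl with h'' | h''
    exacts [hu h'', hv h'']
  have hmset : (0:ℕ) < m ∧ m ∉ G := by
    have hnonempty : {s : ℕ | 0 < s ∧ s ∉ G}.Nonempty := by
      refine ⟨F + 1, by omega, fun h => ?_⟩
      have := hleF _ h; omega
    have := Nat.sInf_mem hnonempty
    exact this
  obtain ⟨hm0, hmG⟩ := hmset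
  have hltm : ∀ k, 0 < k → k < m → k ∈ G := by
    intro k hk hkm
    by_contra hk'
    have : m ≤ k := Nat.sInf_le ⟨hk, hk'⟩
    omega
  obtain ⟨a, b, hab, hd⟩ := hps.2
  obtain ⟨haG, hbG, haltb, hcons⟩ := hab
  have hrun : ∀ j, 0 < j → j < 2*n+1 → a + j ∉ G := by
    intro j hj1 hj2 hmem
    rcases hcons _ hmem with h | h <;> omega
  have hmge : 2*n+1 ≤ m := by
    by_contra h
    push_neg at h
    have h1 : a + (2*n+1-m) ∉ G := hrun _ (by omega) (by omega)
    have h2 := hcl _ _ h1 hmG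
    rw [show a + (2*n+1-m) + m = b by omega] at h2
    exact h2 hbG
  have hmle : m ≤ 3*n+3 := by
    have hsub : Finset.Icc 1 (m-1) ⊆ G := by
      intro k hk
      simp only [Finset.mem_Icc] at hk
      exact hltm k (by omega) (by omega)
    have := Finset.card_le_card hsub
    rw [Nat.card_Icc, hcard] at this
    omega
  have hrefl : ∀ s, s < F → s ∉ G → F - s ∈ G := by
    intro s hs hsG
    by_contra h
    have := hcl _ _ hsG h
    rw [show s + (F - s) = F by omega] at this
    exact this hFmem
  have h3m : 3*m ∉ G := by
    have := hcl _ _ (hcl _ _ hmG hmG) hmG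
    rwa [show m + m + m = 3*m by ring] at this
  set B := G.image (fun z => F - z) with hBdef
  have hBcard : B.card = 3*n+2 := by
    rw [hBdef, Finset.card_image_of_injOn, hcard]
    intro z1 h1 z2 h2 he
    have hz1 := hleF z1 (Finset.mem_coe.mp h1)
    have hz2 := hleF z2 (Finset.mem_coe.mp h2)
    simp only at he
    omega
  have hunion : Finset.Icc 0 F = G ∪ B := by
    apply Finset.Subset.antisymm
    · intro z hz
      simp only [Finset.mem_Icc] at hz
      by_cases hzG : z ∈ G
      · exact Finset.mem_union_left _ hzG
      · apply Finset.mem_union_right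
        rcases eq_or_lt_of_le hz.2 with h | h
        · exact absurd (by rw [h]; exact hFmem) hzG
        rcases Nat.eq_zero_or_pos z with h0z | h0z
        · subst h0z
          rw [hBdef]
          exact Finset.mem_image.mpr ⟨F, hFmem, by omega⟩
        · have hFz : F - z ∈ G := hrefl z h hzG
          rw [hBdef]
          refine Finset.mem_image.mpr ⟨F - z, hFz, by omega⟩
    · intro z hz
      rcases Finset.mem_union.mp hz with h | h
      · exact Finset.mem_Icc.mpr ⟨Nat.zero_le _, hleF _ h⟩
      · rw [hBdef] at h
        obtain ⟨w, hw, hwe⟩ := Finset.mem_image.mp h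
        exact Finset.mem_Icc.mpr ⟨Nat.zero_le _, by omega⟩
  have hinter : (G ∩ B).card + (F + 1) = 6*n + 4 := by
    have h1 := Finset.card_union_add_card_inter G B
    rw [← hunion, Nat.card_Icc, hcard, hBcard] at h1
    omega
  have hmeminter : ∀ z ∈ G, F - z ∈ G → z ∈ G ∩ B := by
    intro z hz hz2
    refine Finset.mem_inter.mpr ⟨hz, ?_⟩
    rw [hBdef]
    refine Finset.mem_image.mpr ⟨F - z, hz2, ?_⟩
    have := hleF z hz; omega
  have part1 : F ≠ 2*(3*n+2) - 1 := by
    intro hF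
    have hF' : F = 6*n+3 := by omega
    have hempty : (G ∩ B).card = 0 := by omega
    rw [Finset.card_eq_zero] at hempty
    have hmlt : m < F := by omega
    have hFm : F - m ∈ G := hrefl m hmlt hmG
    have hmid : ∀ c ∈ G, c ≤ F - m ∨ F ≤ c := by
      intro c hc
      by_contra hcc
      push_neg at hcc
      have h3 : F - c ∈ G := hltm _ (by omega) (by omega)
      have hmm := hmeminter c hc h3
      rw [hempty] at hmm
      exact absurd hmm (Finset.notMem_empty c)
    have hcons2 : Consec G (F - m) F := ⟨hFm, hFmem, by omega, hmid⟩
    have hsp := hps.1 _ _ hcons2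
    have hmeq : m = 2*n+1 := by omega
    exact h3m (by rw [show 3*m = F by omega]; exact hFmem)
  have hF3m : F < 3*m := by
    rcases lt_or_ge F (3*m) with h | h
    · exact h
    · exfalso
      have hFe : F = 3*m := by omega
      exact h3m (hFe ▸ hFmem)
  have part2 : depth G ≤ 3 := by
    have hdiv : (F + m) / m < 4 := (Nat.div_lt_iff_lt_mul hm0).mpr (by omega)
    simp only [depth, ← hFdef, ← hmdef]
    omega
  refine ⟨part1, part2, ?_⟩
  intro hF
  have hF' : F = 6*n+2 := by omega
  have hinter1 : (G ∩ B).card = 1 := by omega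
  have hhalf : (3*n+1) ∈ G := by
    by_contra h
    have := hcl _ _ h h
    rw [show (3*n+1) + (3*n+1) = F by omega] at this
    exact this hFmem
  have hhalfmem : (3*n+1) ∈ G ∩ B :=
    hmeminter _ hhalf (by rw [show F - (3*n+1) = 3*n+1 by omega]; exact hhalf)
  have hsingle : ∀ z ∈ G, F - z ∈ G → z = 3*n+1 := by
    intro z hz hz2
    have h1 := hmeminter z hz hz2
    obtain ⟨w, hw⟩ := Finset.card_eq_one.mp hinter1
    rw [hw] at h1 hhalfmem
    simp only [Finset.mem_singleton] at h1 hhalfmem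
    omega
  have hm31 : m ≤ 3*n+1 := by
    by_contra h
    push_neg at h
    have hsub : Finset.Icc 1 (3*n+1) ∪ {F} ⊆ G := by
      intro z hz
      rcases Finset.mem_union.mp hz with h' | h'
      · simp only [Finset.mem_Icc] at h'
        exact hltm z (by omega) (by omega)
      · simp only [Finset.mem_singleton] at h'
        rw [h']; exact hFmem
    have hdisj : Disjoint (Finset.Icc 1 (3*n+1)) ({F} : Finset ℕ) := by
      rw [Finset.disjoint_singleton_right, Finset.mem_Icc]
      omega
    have hcardsub : (Finset.Icc 1 (3*n+1) ∪ {F}).card = 3*n+2 := by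
      rw [Finset.card_union_of_disjoint hdisj, Nat.card_Icc, Finset.card_singleton]
      omega
    have hGeq : G = Finset.Icc 1 (3*n+1) ∪ {F} :=
      (Finset.eq_of_subset_of_card_le hsub (by rw [hcardsub, hcard])).symm
    have hcons3 : Consec G (3*n+1) F := by
      refine ⟨hhalf, hFmem, by omega, ?_⟩
      intro c hc
      rw [hGeq] at hc
      rcases Finset.mem_union.mp hc with h' | h'
      · left; simp only [Finset.mem_Icc] at h'; omega
      · right; simp only [Finset.mem_singleton] at h'; omega
    have := hps.1 _ _ hcons3
    omega
  have hFm : F - m ∈ G := hrefl m (by omega) hmG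
  have hmid : ∀ c ∈ G, c ≤ F - m ∨ F ≤ c := by
    intro c hc
    by_contra hcc
    push_neg at hcc
    have h3 : F - c ∈ G := hltm _ (by omega) (by omega)
    have := hsingle c hc h3
    omega
  have hcons2 : Consec G (F - m) F := ⟨hFm, hFmem, by omega, hmid⟩
  have hsp := hps.1 _ _ hcons2
  have hmeq : m = 2*n+1 := by omega
  refine ⟨?_, hmeq⟩
  simp only [depth, ← hFdef, ← hmdef]
  rw [hmeq, hF']
  rw [show 6*n+2 + (2*n+1) = (2*n+1)*3 + 2*n by ring, Nat.mul_add_div (by omega),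
    Nat.div_eq_of_lt (by omega)]
end

section
/- For each positive integer n, the number of pure (2n)-sparse gapsets of genus 3n+1 equals the number of pure (2n+1)-sparse gapsets of genus 3n+2. -/
/-!
Let `m` be the multiplicity of a gapset and `c` the start of its last gap of maximal length. The
paper's map `σ` (insert `1`, shift the elements by one up to `c` and by two beyond) yields a gapset
as soon as `c ≤ 2m` and all elements are at most `c + m + 1`; its inverse yields a gapset as soon
as `c + 3 ≤ 2m` and all elements are at most `c + 1 + m`. Both pairs of bounds follow from the
genus when the Frobenius number `F` is below `6n + 1` on the even side, resp. `6n + 2` on the odd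
side, and `σ` is then a bijection between these gapsets, `c + 1` being the start of the last gap
of the image. Counting the pairs `{ℓ, F - ℓ}` inside a gapset shows that the other gapsets are
symmetric with `F = 6n + 1`, resp. pseudo-symmetric with `F = 6n + 2`; on either side they are
determined by their elements in `[2n + 2, 3n]`, and every subset occurs.
-/

open Finset

namespace IsGapset

variable {G : Finset ℕ}

theorem pos (hG : IsGapset G) {x : ℕ} (hx : x ∈ G) : 0 < x :=
  Nat.pos_of_ne_zero fun h => hG.1 (h ▸ hx)

theorem mem_of_add_mem (hG : IsGapset G) {x y : ℕ} (h : x + y ∈ G) (hx : 0 < x) (hy : 0 < y)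
    (hxG : x ∉ G) : y ∈ G :=
  (hG.2 _ h x y hx hy rfl).resolve_left hxG

theorem mem_of_consec (hG : IsGapset G) {c d j w : ℕ} (hcd : Consec G c d)
    (hz : c + j + w ∈ G) (hj : 0 < j) (hjd : c + j < d) (hw : 0 < w) : w ∈ G :=
  hG.mem_of_add_mem hz (by omega) hw fun h => (hcd.2.2.2 _ h).elim (by omega) (by omega)

/-- Each `j ∈ [1, z)` outside `G` has its partner `z - j` in `G`, and that partner is not one of
the `ℓ` whose partner `z - ℓ` lies in `G` as well. -/
theorem add_card_pairs_lt (hG : IsGapset G) {z : ℕ} (hz : z ∈ G) :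
    z + #(G.filter fun ℓ => ℓ < z ∧ z - ℓ ∈ G) < 2 * #G := by
  set S := G.filter (· < z)
  set P := G.filter fun ℓ => ℓ < z ∧ z - ℓ ∈ G
  have hPS : P ⊆ S := fun ℓ hℓ => by
    simp only [P, S, mem_filter] at hℓ ⊢
    exact ⟨hℓ.1, hℓ.2.1⟩
  have hcover : Ico 1 z ⊆ S ∪ (S \ P).image (z - ·) := by
    intro j hj
    rw [mem_Ico] at hj
    by_cases hjG : j ∈ G
    · exact mem_union_left _ (mem_filter.2 ⟨hjG, hj.2⟩)
    · have hzj : z - j ∈ G :=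
        hG.mem_of_add_mem (x := j) (by rwa [Nat.add_sub_cancel' hj.2.le]) hj.1 (by omega) hjG
      refine mem_union_right _ (mem_image.2 ⟨z - j, ?_, by omega⟩)
      simp only [S, P, mem_sdiff, mem_filter, not_and]
      exact ⟨⟨hzj, by omega⟩, fun _ _ h => hjG (by rwa [Nat.sub_sub_self hj.2.le] at h)⟩
  have hS : #S < #G := card_lt_card (filter_ssubset.2 ⟨z, hz, lt_irrefl z⟩)
  have hcard_cover := card_le_card hcover
  have := card_union_le S ((S \ P).image (z - ·))
  have := card_image_le (s := S \ P) (f := (z - ·))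
  have := card_sdiff_of_subset hPS
  have := card_le_card hPS
  rw [Nat.card_Ico] at hcard_cover
  omega

theorem lt_two_mul_card (hG : IsGapset G) {z : ℕ} (hz : z ∈ G) : z < 2 * #G := by
  have := hG.add_card_pairs_lt hz
  omega

theorem two_mul_eq_of_mem_of_sub_mem (hG : IsGapset G) {z x : ℕ} (hz : z ∈ G)
    (hcard : 2 * #G ≤ z + 2) (hx : x ∈ G) (hxz : x < z) (hzx : z - x ∈ G) : 2 * x = z := by
  by_contra hne
  have hx0 := hG.pos hx
  have hsub : {x, z - x} ⊆ G.filter fun ℓ => ℓ < z ∧ z - ℓ ∈ G := by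
    intro ℓ hℓ
    rw [mem_insert, mem_singleton] at hℓ
    rcases hℓ with rfl | rfl
    · exact mem_filter.2 ⟨hx, hxz, hzx⟩
    · exact mem_filter.2 ⟨hzx, by omega, by rwa [Nat.sub_sub_self hxz.le]⟩
  have hcard_pair := card_le_card hsub
  rw [card_pair (by omega)] at hcard_pair
  have := hG.add_card_pairs_lt hz
  omega

end IsGapset

namespace Gapset

variable {G H : Finset ℕ}

theorem isGapset_of_le (h0 : 0 ∉ G)
    (h : ∀ z ∈ G, ∀ x y, 0 < x → x ≤ y → z = x + y → x ∈ G ∨ y ∈ G) : IsGapset G := by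
  refine ⟨h0, fun z hz x y hx hy hxy => ?_⟩
  rcases le_total x y with hle | hle
  · exact h z hz x y hx hle hxy
  · exact (h z hz y x hy hle (by omega)).symm

theorem exists_consec_of_lt {y z : ℕ} (hy : y ∈ G) (hz : z ∈ G) (hyz : y < z) :
    ∃ c, Consec G c z := by
  have hne : (G.filter (· < z)).Nonempty := ⟨y, mem_filter.2 ⟨hy, hyz⟩⟩
  obtain ⟨hc, hcz⟩ := mem_filter.1 ((G.filter (· < z)).max'_mem hne)
  refine ⟨_, hc, hz, hcz, fun d hd => ?_⟩
  by_cases hdz : d < z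
  · exact Or.inl ((G.filter (· < z)).le_max' d (mem_filter.2 ⟨hd, hdz⟩))
  · exact Or.inr (not_lt.1 hdz)

theorem sparse_of_exists_succ {κ : ℕ}
    (h : ∀ u ∈ G, ∀ v ∈ G, u < v → ∃ w ∈ G, u < w ∧ w ≤ u + κ) :
    ∀ c d, Consec G c d → d - c ≤ κ := by
  rintro c d ⟨hc, hd, hcd, hbet⟩
  obtain ⟨w, hw, hcw, hwc⟩ := h c hc d hd hcd
  rcases hbet w hw with h | h <;> omega

section mult

theorem exists_pos_notMem (G : Finset ℕ) : {s : ℕ | 0 < s ∧ s ∉ G}.Nonempty :=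
  ⟨G.sup id + 1, Nat.succ_pos _, fun h => by
    have := le_sup (f := id) h
    simp only [id] at this
    omega⟩

theorem mult_notMem (G : Finset ℕ) : mult G ∉ G := (Nat.sInf_mem (exists_pos_notMem G)).2

theorem mult_pos (G : Finset ℕ) : 0 < mult G := (Nat.sInf_mem (exists_pos_notMem G)).1

theorem mult_le {k : ℕ} (hk : 0 < k) (hkG : k ∉ G) : mult G ≤ k := Nat.sInf_le ⟨hk, hkG⟩

theorem mem_of_lt_mult {k : ℕ} (hk : 0 < k) (hkm : k < mult G) : k ∈ G := by
  by_contra h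
  exact absurd (mult_le hk h) (by omega)

theorem mult_sub_one_add_card_le {S : Finset ℕ} (hS : S ⊆ G) (hSm : ∀ s ∈ S, mult G ≤ s) :
    mult G - 1 + #S ≤ #G := by
  have hdisj : Disjoint (Ico 1 (mult G)) S := disjoint_left.2 fun x hx hxS => by
    rw [mem_Ico] at hx
    have := hSm x hxS
    omega
  have hsub : Ico 1 (mult G) ∪ S ⊆ G :=
    union_subset (fun x hx => by rw [mem_Ico] at hx; exact mem_of_lt_mult hx.1 hx.2) hS
  have := card_le_card hsub
  rwa [card_union_of_disjoint hdisj, Nat.card_Ico] at this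

end mult

section lastJump

/-- `a` is the paper's `ℓ_α` for the maximal gap length `κ`. -/
structure IsLastJump (κ : ℕ) (G : Finset ℕ) (a : ℕ) : Prop where
  sparse : ∀ c d, Consec G c d → d - c ≤ κ
  consec : Consec G a (a + κ)
  le_of_consec : ∀ c, Consec G c (c + κ) → c ≤ a

noncomputable def lastJump (κ : ℕ) (G : Finset ℕ) : ℕ := sSup {c | Consec G c (c + κ)}

theorem isLastJump_lastJump {κ : ℕ} (h : PureSparse κ G) : IsLastJump κ G (lastJump κ G) := by
  obtain ⟨a, b, hab, hba⟩ := h.2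
  have hb : b = a + κ := by have := hab.2.2.1; omega
  have hne : {c | Consec G c (c + κ)}.Nonempty := ⟨a, show Consec G a (a + κ) from hb ▸ hab⟩
  have hbdd : BddAbove {c | Consec G c (c + κ)} := ⟨G.sup id, fun c hc => le_sup (f := id) hc.1⟩
  exact ⟨h.1, Nat.sSup_mem hne hbdd, fun c hc => le_csSup hbdd hc⟩

namespace IsLastJump

variable {κ a : ℕ}

theorem pureSparse (h : IsLastJump κ G a) : PureSparse κ G :=
  ⟨h.sparse, a, a + κ, h.consec, by omega⟩

theorem unique {a' : ℕ} (h : IsLastJump κ G a) (h' : IsLastJump κ G a') : a = a' :=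
  le_antisymm (h'.le_of_consec a h.consec) (h.le_of_consec a' h'.consec)

theorem lastJump_eq (h : IsLastJump κ G a) : lastJump κ G = a :=
  (isLastJump_lastJump h.pureSparse).unique h

theorem mem (h : IsLastJump κ G a) : a ∈ G := h.consec.1

theorem add_mem (h : IsLastJump κ G a) : a + κ ∈ G := h.consec.2.1

theorem le_or_le (h : IsLastJump κ G a) {c : ℕ} (hc : c ∈ G) : c ≤ a ∨ a + κ ≤ c :=
  h.consec.2.2.2 c hc

theorem notMem (h : IsLastJump κ G a) {c : ℕ} (h1 : a < c) (h2 : c < a + κ) : c ∉ G :=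
  fun hc => (h.le_or_le hc).elim (by omega) (by omega)

theorem mem_of_lt (hG : IsGapset G) (h : IsLastJump κ G a) {k : ℕ} (hk : 0 < k) (hkκ : k < κ) :
    k ∈ G :=
  hG.mem_of_consec h.consec (j := κ - k)
    (by rw [show a + (κ - k) + k = a + κ by omega]; exact h.add_mem) (by omega) (by omega) hk

theorem le_mult (hG : IsGapset G) (h : IsLastJump κ G a) : κ ≤ mult G := by
  by_contra hlt
  exact mult_notMem G (h.mem_of_lt hG (mult_pos G) (by omega))

theorem mult_le_add_one (h : IsLastJump κ G a) (hκ : 2 ≤ κ) : mult G ≤ a + 1 :=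
  mult_le (by omega) (h.notMem (by omega) (by omega))

/-- As `2 * #G ≤ z + 2`, a pair `ℓ, z - ℓ` inside `G` must have `ℓ = z - ℓ`. So the partners of
`1, …, κ - 1 ∈ G` are not in `G`, the element before `z` is `z - κ`, and its partner `κ` is not in
`G` either. -/
theorem sub_mem_and_notMem_of_two_mul_card_le (hG : IsGapset G) (h : IsLastJump κ G a)
    (hκ : 2 ≤ κ) {z : ℕ} (hz : z ∈ G) (hzκ : 2 * κ < z) (hcard : 2 * #G ≤ z + 2) :
    z - κ ∈ G ∧ κ ∉ G := by
  obtain ⟨d, hd⟩ := exists_consec_of_lt (h.mem_of_lt hG one_pos (by omega)) hz (by omega)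
  have hdz := h.sparse d z hd
  have hd' : d = z - κ := by
    by_contra hne
    have hlt := hd.2.2.1
    have hzd : z - d ∈ G := h.mem_of_lt hG (by omega) (by omega)
    have := hG.two_mul_eq_of_mem_of_sub_mem hz hcard hd.1 hlt hzd
    omega
  refine ⟨hd' ▸ hd.1, fun hκG => ?_⟩
  have := hG.two_mul_eq_of_mem_of_sub_mem hz hcard hκG (by omega) (hd' ▸ hd.1)
  omega

end IsLastJump

end lastJump

section stretch

variable {c κ : ℕ}

def shift (c ℓ : ℕ) : ℕ := if ℓ ≤ c then ℓ + 1 else ℓ + 2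

theorem shift_of_le {ℓ : ℕ} (h : ℓ ≤ c) : shift c ℓ = ℓ + 1 := if_pos h

theorem shift_of_lt {ℓ : ℕ} (h : c < ℓ) : shift c ℓ = ℓ + 2 := if_neg (by omega)

theorem shift_strictMono (c : ℕ) : StrictMono (shift c) := by
  intro x y h
  unfold shift
  split_ifs <;> omega

theorem shift_eq_one {ℓ : ℕ} : shift c ℓ = 1 ↔ ℓ = 0 := by
  unfold shift
  split_ifs <;> omega

/-- The paper's `σ`, with `c = ℓ_α`. -/
def stretch (c : ℕ) (G : Finset ℕ) : Finset ℕ := insert 1 (G.image (shift c))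

noncomputable def shrink (c : ℕ) (H : Finset ℕ) : Finset ℕ :=
  (H.erase 1).preimage (shift c) (shift_strictMono c).injective.injOn

theorem mem_stretch {w : ℕ} : w ∈ stretch c G ↔ w = 1 ∨ ∃ ℓ ∈ G, shift c ℓ = w := by
  simp [stretch]

theorem one_le_of_mem_stretch {w : ℕ} (hw : w ∈ stretch c G) : 1 ≤ w := by
  rcases mem_stretch.1 hw with rfl | ⟨ℓ, -, rfl⟩
  · exact le_rfl
  · unfold shift
    split_ifs <;> omega

theorem shift_mem_stretch_iff {ℓ : ℕ} (hℓ : ℓ ≠ 0) : shift c ℓ ∈ stretch c G ↔ ℓ ∈ G := by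
  simp [mem_stretch, shift_eq_one, hℓ, (shift_strictMono c).injective.eq_iff]

theorem mem_shrink {v : ℕ} : v ∈ shrink c H ↔ v ≠ 0 ∧ shift c v ∈ H := by
  simp [shrink, shift_eq_one, and_comm]

theorem zero_notMem_shrink : 0 ∉ shrink c H := fun h => (mem_shrink.1 h).1 rfl

theorem card_stretch (h0 : 0 ∉ G) : #(stretch c G) = #G + 1 := by
  rw [stretch, card_insert_of_notMem, card_image_of_injective _ (shift_strictMono c).injective]
  simp only [mem_image, shift_eq_one, not_exists, not_and]
  rintro ℓ hℓ rfl
  exact h0 hℓ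

theorem shrink_stretch (h0 : 0 ∉ G) : shrink c (stretch c G) = G := by
  ext v
  rw [mem_shrink]
  constructor
  · rintro ⟨hv, hmem⟩
    exact (shift_mem_stretch_iff hv).1 hmem
  · intro hv
    have hv0 : v ≠ 0 := by rintro rfl; exact h0 hv
    exact ⟨hv0, (shift_mem_stretch_iff hv0).2 hv⟩

theorem stretch_shrink (h0 : 0 ∉ H) (h1 : 1 ∈ H) (hc : c + 2 ∉ H) :
    stretch c (shrink c H) = H := by
  ext w
  simp only [mem_stretch, mem_shrink]
  constructor
  · rintro (rfl | ⟨v, ⟨-, hv⟩, rfl⟩)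
    exacts [h1, hv]
  · intro hw
    by_cases hw1 : w = 1
    · exact Or.inl hw1
    have hw2 : 2 ≤ w := by
      have : w ≠ 0 := by rintro rfl; exact h0 hw
      omega
    refine Or.inr ?_
    by_cases hwc : w ≤ c + 1
    · refine ⟨w - 1, ⟨by omega, ?_⟩, ?_⟩ <;>
        rw [shift_of_le (by omega), Nat.sub_add_cancel (by omega)]
      exact hw
    · have : w ≠ c + 2 := by rintro rfl; exact hc hw
      refine ⟨w - 2, ⟨by omega, ?_⟩, ?_⟩ <;>
        rw [shift_of_lt (by omega), Nat.sub_add_cancel (by omega)]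
      exact hw

theorem consec_shift_iff (h0 : 0 ∉ G) {d e : ℕ} (hd : 0 < d) :
    Consec (stretch c G) (shift c d) (shift c e) ↔ Consec G d e := by
  have hmono := shift_strictMono c
  unfold Consec
  rw [hmono.lt_iff_lt]
  constructor
  · rintro ⟨hdS, heS, hde, hbet⟩
    refine ⟨(shift_mem_stretch_iff hd.ne').1 hdS, (shift_mem_stretch_iff (by omega)).1 heS, hde,
      fun ℓ hℓ => ?_⟩
    have hℓ0 : ℓ ≠ 0 := by rintro rfl; exact h0 hℓ
    simpa only [hmono.le_iff_le] using hbet _ ((shift_mem_stretch_iff hℓ0).2 hℓ)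
  · rintro ⟨hdG, heG, hde, hbet⟩
    refine ⟨(shift_mem_stretch_iff hd.ne').2 hdG, (shift_mem_stretch_iff (by omega)).2 heG, hde,
      fun w hw => ?_⟩
    rcases mem_stretch.1 hw with rfl | ⟨ℓ, hℓ, rfl⟩
    · exact Or.inl (one_le_of_mem_stretch ((shift_mem_stretch_iff hd.ne').2 hdG))
    · simpa only [hmono.le_iff_le] using hbet ℓ hℓ

theorem consec_stretch (h0 : 0 ∉ G) {u v : ℕ} (h : Consec (stretch c G) u v) :
    u = 1 ∨ ∃ d e, Consec G d e ∧ shift c d = u ∧ shift c e = v := by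
  have hv1 : v ≠ 1 := by have := one_le_of_mem_stretch h.1; have := h.2.2.1; omega
  obtain ⟨e, -, rfl⟩ := (mem_stretch.1 h.2.1).resolve_left hv1
  rcases mem_stretch.1 h.1 with rfl | ⟨d, hd, rfl⟩
  · exact Or.inl rfl
  · have hd0 : 0 < d := Nat.pos_of_ne_zero (by rintro rfl; exact h0 hd)
    exact Or.inr ⟨d, e, (consec_shift_iff h0 hd0).1 h, rfl, rfl⟩

theorem isLastJump_stretch (hG : IsGapset G) (h1 : 1 ∈ G) (hJ : IsLastJump κ G c) (hκ : 1 ≤ κ) :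
    IsLastJump (κ + 1) (stretch c G) (c + 1) := by
  have hc := hG.pos hJ.mem
  have h2 : 2 ∈ stretch c G := mem_stretch.2 (Or.inr ⟨1, h1, shift_of_le hc⟩)
  have hshift : ∀ d e, Consec G d e →
      shift c e - shift c d = e - d + if d = c ∧ c < e then 1 else 0 := by
    intro d e hde
    have := hde.2.2.1
    have := hde.2.2.2 c hJ.mem
    unfold shift
    split_ifs <;> omega
  have hcases : ∀ u v, Consec (stretch c G) u v →
      (u = 1 ∧ v = 2) ∨ ∃ d e, Consec G d e ∧ shift c d = u ∧ shift c e = v := by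
    intro u v huv
    rcases consec_stretch hG.1 huv with rfl | h
    · have := huv.2.2.1
      have := huv.2.2.2 2 h2
      exact Or.inl ⟨rfl, by omega⟩
    · exact Or.inr h
  refine ⟨fun u v huv => ?_, ?_, fun u huv => ?_⟩
  · rcases hcases u v huv with ⟨rfl, rfl⟩ | ⟨d, e, hde, rfl, rfl⟩
    · omega
    · have := hJ.sparse d e hde
      have := hshift d e hde
      split_ifs at this <;> omega
  · have := (consec_shift_iff (c := c) hG.1 hc).2 hJ.consec
    rwa [shift_of_le le_rfl, shift_of_lt (by omega), show c + κ + 2 = c + 1 + (κ + 1) by omega]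
      at this
  · rcases hcases u _ huv with ⟨rfl, h⟩ | ⟨d, e, hde, rfl, he⟩
    · omega
    · have := hJ.sparse d e hde
      have := hshift d e hde
      split_ifs at this with hdc
      · rw [hdc.1, shift_of_le le_rfl]
      · omega

theorem isLastJump_shrink (hJ : IsLastJump (κ + 1) H (c + 1)) (hκ : 1 ≤ κ) (hc : 0 < c)
    (h0 : 0 ∉ H) (h1 : 1 ∈ H) (huniq : ∀ d, Consec H d (d + (κ + 1)) → d = c + 1)
    (hlate : ∀ d, c + 1 < d → ¬ Consec H d (d + κ)) : IsLastJump κ (shrink c H) c := by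
  have hH : stretch c (shrink c H) = H := stretch_shrink h0 h1 (hJ.notMem (by omega) (by omega))
  have transport : ∀ d e, Consec (shrink c H) d e → Consec H (shift c d) (shift c e) :=
    fun d e hde => hH ▸ (consec_shift_iff zero_notMem_shrink
      (Nat.pos_of_ne_zero fun h => zero_notMem_shrink (h ▸ hde.1))).2 hde
  refine ⟨fun d e hde => ?_, ?_, fun d hd => ?_⟩
  · have hHde := transport d e hde
    have := hJ.sparse _ _ hHde
    by_contra! hlong
    have hde' := hde.2.2.1
    have heq : shift c e = shift c d + (κ + 1) := by
      unfold shift at this ⊢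
      split_ifs at this ⊢ <;> omega
    have hjump := huniq _ (heq ▸ hHde)
    unfold shift at hjump this
    split_ifs at hjump this <;> omega
  · have := hH.symm ▸ hJ.consec
    rw [show c + 1 + (κ + 1) = shift c (c + κ) by rw [shift_of_lt (by omega)]; omega,
      ← shift_of_le (le_refl c)] at this
    exact (consec_shift_iff zero_notMem_shrink hc).1 this
  · by_contra! hcd
    apply hlate (d + 2) (by omega)
    have := transport d (d + κ) hd
    rwa [shift_of_lt hcd, shift_of_lt (by omega), show d + κ + 2 = d + 2 + κ by omega] at this

theorem mult_lt_of_notMem_stretch (hJ : IsLastJump κ G c) (hκ : 2 ≤ κ) {x : ℕ} (hx : 0 < x)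
    (hxS : x ∉ stretch c G) : mult G < x := by
  have hm := hJ.mult_le_add_one hκ
  by_contra! hxm
  have hx1 : x ≠ 1 := fun h => hxS (mem_stretch.2 (Or.inl h))
  exact hxS (mem_stretch.2 (Or.inr ⟨x - 1, mem_of_lt_mult (by omega) (by omega),
    by rw [shift_of_le (by omega)]; omega⟩))

theorem sub_one_notMem_of_notMem_stretch (hJ : IsLastJump κ G c) (hκ : 2 ≤ κ) {x : ℕ}
    (hx : 2 ≤ x) (hxc : x ≤ c + 2) (hxS : x ∉ stretch c G) : x - 1 ∉ G := fun hmem => by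
  have : x - 1 ≠ c + 1 := fun h => hJ.notMem (by omega) (by omega) (h ▸ hmem)
  exact hxS (mem_stretch.2 (Or.inr ⟨x - 1, hmem, by rw [shift_of_le (by omega)]; omega⟩))

/-- If `x, y ∉ stretch c G` but `x + y ∈ stretch c G`, then `x, y > mult G`, so `x + y > c + 1`
and `x + y - 2 ∈ G`; the bound on `G` then forces `x, y ≤ c + 2`, so that `x - 1, y - 1 ∉ G`. -/
theorem isGapset_stretch (hG : IsGapset G) (hJ : IsLastJump κ G c) (hκ : 2 ≤ κ)
    (hc : c ≤ 2 * mult G) (htop : ∀ ℓ ∈ G, ℓ ≤ c + mult G + 1) : IsGapset (stretch c G) := by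
  refine ⟨fun h => absurd (one_le_of_mem_stretch h) (by omega), fun z hz x y hx hy hxy => ?_⟩
  by_contra! hxyS
  have hxm := mult_lt_of_notMem_stretch hJ hκ hx hxyS.1
  have hym := mult_lt_of_notMem_stretch hJ hκ hy hxyS.2
  have := mult_pos G
  rcases mem_stretch.1 hz with rfl | ⟨ℓ, hℓ, rfl⟩
  · omega
  have := htop ℓ hℓ
  unfold shift at hxy
  split_ifs at hxy
  · omega
  · exact (hG.2 ℓ hℓ (x - 1) (y - 1) (by omega) (by omega) (by omega)).elim
      (sub_one_notMem_of_notMem_stretch hJ hκ (by omega) (by omega) hxyS.1)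
      (sub_one_notMem_of_notMem_stretch hJ hκ (by omega) (by omega) hxyS.2)

/-- If `x, y ∉ shrink c H` but `x + y ∈ shrink c H`, then `x + 1, y + 1 ≥ mult H`, so `x + y > c`
and `x + y + 2 ∈ H`; the bound on `H` then forces `x, y ≤ c`, so that `x + 1, y + 1 ∉ H`. -/
theorem isGapset_shrink (hH : IsGapset H) (hJ : IsLastJump κ H (c + 1)) (hκ : 2 ≤ κ)
    (hc : c + 3 ≤ 2 * mult H) (htop : ∀ ℓ ∈ H, ℓ ≤ c + 1 + mult H) : IsGapset (shrink c H) := by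
  have hm := hJ.mult_le_add_one hκ
  have hlow : ∀ x, 0 < x → x ∉ shrink c H → shift c x ∉ H ∧ mult H ≤ x + 1 := by
    intro x hx hxK
    have hxH : shift c x ∉ H := fun h => hxK (mem_shrink.2 ⟨by omega, h⟩)
    refine ⟨hxH, ?_⟩
    have := mult_le (by unfold shift; split_ifs <;> omega) hxH
    unfold shift at this
    split_ifs at this <;> omega
  refine ⟨zero_notMem_shrink, fun z hz x y hx hy hxy => ?_⟩
  by_contra! hxyK
  obtain ⟨hxH, hxm⟩ := hlow x hx hxyK.1
  obtain ⟨hyH, hym⟩ := hlow y hy hxyK.2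
  have hzH := (mem_shrink.1 hz).2
  have := htop _ hzH
  subst hxy
  by_cases hxc : x ≤ c
  · by_cases hyc : y ≤ c
    · rw [shift_of_le hxc] at hxH
      rw [shift_of_le hyc] at hyH
      by_cases hzc : x + y ≤ c
      · rw [shift_of_le hzc] at hzH this
        omega
      · rw [shift_of_lt (by omega)] at hzH
        exact (hH.2 _ hzH (x + 1) (y + 1) (by omega) (by omega) (by omega)).elim hxH hyH
    · rw [shift_of_lt (by omega)] at this
      omega
  · rw [shift_of_lt (by omega)] at this
    omega

end stretch

section sparse

structure EvenSparse (n : ℕ) (G : Finset ℕ) (c : ℕ) : Prop where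
  pos : 0 < n
  isGapset : IsGapset G
  isLastJump : IsLastJump (2 * n) G c
  card_eq : #G = 3 * n + 1

structure OddSparse (n : ℕ) (H : Finset ℕ) (a : ℕ) : Prop where
  pos : 0 < n
  isGapset : IsGapset H
  isLastJump : IsLastJump (2 * n + 1) H a
  card_eq : #H = 3 * n + 2

namespace EvenSparse

variable {n c ℓ : ℕ}

theorem six_mul_notMem (h : EvenSparse n G c) : 6 * n ∉ G := by
  have := h.pos
  intro h6
  obtain ⟨h4, h2⟩ := h.isLastJump.sub_mem_and_notMem_of_two_mul_card_le h.isGapset (by omega)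
    h6 (by omega) (by rw [h.card_eq]; omega)
  rw [show 6 * n - 2 * n = 2 * n + 2 * n by omega] at h4
  exact h2 (h.isGapset.mem_of_add_mem h4 (by omega) (by omega) h2)

theorem lt_six_mul (h : EvenSparse n G c) (hreg : 6 * n + 1 ∉ G) (hℓ : ℓ ∈ G) : ℓ < 6 * n := by
  have := h.isGapset.lt_two_mul_card hℓ
  have : ℓ ≠ 6 * n := by rintro rfl; exact h.six_mul_notMem hℓ
  have : ℓ ≠ 6 * n + 1 := by rintro rfl; exact hreg hℓ
  rw [h.card_eq] at *
  omega

theorem le_two_mul_mult (h : EvenSparse n G c) (hreg : 6 * n + 1 ∉ G) : c ≤ 2 * mult G := by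
  have := h.lt_six_mul hreg h.isLastJump.add_mem
  have := h.isLastJump.le_mult h.isGapset
  omega

/-- Otherwise `ℓ - mult G ∈ G` lies beyond the last `2n`-gap, which forces `mult G = 2n`,
`c = 2n - 1` and `ℓ = 6n - 1`; then `ℓ = c + (2n - 1) + (2n + 1)` puts `2n + 1` into the gap
`(c, c + 2n)`, except for `n = 1`, where `G ⊆ {1, 3, 5}` is too small. -/
theorem le_add_mult_add_one (h : EvenSparse n G c) (hreg : 6 * n + 1 ∉ G) (hℓ : ℓ ∈ G) :
    ℓ ≤ c + mult G + 1 := by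
  have hG := h.isGapset
  have hJ := h.isLastJump
  have := h.pos
  have hm1 := hJ.le_mult hG
  have hm2 := hJ.mult_le_add_one (by omega)
  have hmG := mult_notMem G
  have hcm : c ≠ mult G := fun hc => hmG (hc ▸ hJ.mem)
  have hℓ6 := h.lt_six_mul hreg hℓ
  by_contra! hbig
  have hℓm : ℓ - mult G ∈ G :=
    hG.mem_of_add_mem (x := mult G) (by rwa [Nat.add_sub_cancel' (by omega)]) (mult_pos G)
      (by omega) hmG
  have := (hJ.le_or_le hℓm).resolve_left (by omega)
  obtain rfl | hn2 := (show n = 1 ∨ 2 ≤ n by omega)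
  · have h2 : 2 ∉ G := by rwa [show 2 = mult G by omega]
    have h4 : 4 ∉ G := fun h4 => h2 (hG.mem_of_add_mem (x := 2) h4 (by omega) (by omega) h2)
    have hsub : G ⊆ {1, 3, 5} := fun k hk => by
      have := h.lt_six_mul hreg hk
      have := hG.pos hk
      have : k ≠ 2 := by rintro rfl; exact h2 hk
      have : k ≠ 4 := by rintro rfl; exact h4 hk
      simp only [mem_insert, mem_singleton]
      omega
    have := card_le_card hsub
    rw [h.card_eq] at this
    simp at this
  · exact hJ.notMem (c := 2 * n + 1) (by omega) (by omega)
      (hG.mem_of_consec hJ.consec (j := 2 * n - 1)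
        (by rwa [show c + (2 * n - 1) + (2 * n + 1) = ℓ by omega]) (by omega) (by omega)
        (by omega))

theorem oddSparse_stretch (h : EvenSparse n G c) (hreg : 6 * n + 1 ∉ G) :
    OddSparse n (stretch c G) (c + 1) ∧ 6 * n + 2 ∉ stretch c G := by
  have hG := h.isGapset
  have hJ := h.isLastJump
  have := h.pos
  refine ⟨⟨h.pos, isGapset_stretch hG hJ (by omega) (h.le_two_mul_mult hreg)
      fun ℓ hℓ => h.le_add_mult_add_one hreg hℓ,
    isLastJump_stretch hG (hJ.mem_of_lt hG one_pos (by omega)) hJ (by omega),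
    by rw [card_stretch hG.1, h.card_eq]⟩, fun h6 => ?_⟩
  rcases mem_stretch.1 h6 with h1 | ⟨ℓ, hℓ, hℓ6⟩
  · omega
  · have := h.lt_six_mul hreg hℓ
    unfold shift at hℓ6
    split_ifs at hℓ6 <;> omega

end EvenSparse

namespace OddSparse

variable {n a d ℓ : ℕ}

theorem six_mul_add_three_notMem (h : OddSparse n H a) : 6 * n + 3 ∉ H := by
  have := h.pos
  intro h6
  obtain ⟨h4, h2⟩ := h.isLastJump.sub_mem_and_notMem_of_two_mul_card_le h.isGapset (by omega)
    h6 (by omega) (by rw [h.card_eq]; omega)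
  rw [show 6 * n + 3 - (2 * n + 1) = (2 * n + 1) + (2 * n + 1) by omega] at h4
  exact h2 (h.isGapset.mem_of_add_mem h4 (by omega) (by omega) h2)

theorem le_six_mul_add_one (h : OddSparse n H a) (hreg : 6 * n + 2 ∉ H) (hℓ : ℓ ∈ H) :
    ℓ ≤ 6 * n + 1 := by
  have := h.isGapset.lt_two_mul_card hℓ
  have : ℓ ≠ 6 * n + 2 := by rintro rfl; exact hreg hℓ
  have : ℓ ≠ 6 * n + 3 := by rintro rfl; exact h.six_mul_add_three_notMem hℓ
  rw [h.card_eq] at *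
  omega

theorem add_two_le_two_mul_mult (h : OddSparse n H a) (hreg : 6 * n + 2 ∉ H) :
    a + 2 ≤ 2 * mult H := by
  have := h.le_six_mul_add_one hreg h.isLastJump.add_mem
  have := h.isLastJump.le_mult h.isGapset
  omega

theorem le_add_mult (h : OddSparse n H a) (hreg : 6 * n + 2 ∉ H) (hℓ : ℓ ∈ H) :
    ℓ ≤ a + mult H := by
  have hJ := h.isLastJump
  have := h.pos
  have hm1 := hJ.le_mult h.isGapset
  have hm2 := hJ.mult_le_add_one (by omega)
  have := h.le_six_mul_add_one hreg hℓ
  by_contra! hbig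
  have hℓm : ℓ - mult H ∈ H :=
    h.isGapset.mem_of_add_mem (x := mult H) (by rwa [Nat.add_sub_cancel' (by omega)])
      (mult_pos H) (by omega) (mult_notMem H)
  have := (hJ.le_or_le hℓm).resolve_left (by omega)
  omega

/-- A second such gap `(d, d + 2n + 1)` reflects through `a + 2n + 1 ∈ H` onto the run
`[a - d + 1, a - d + 2n] ⊆ H`, which would contain `mult H` unless the genus is too large. -/
theorem eq_of_consec (h : OddSparse n H a) (hreg : 6 * n + 2 ∉ H)
    (hd : Consec H d (d + (2 * n + 1))) : d = a := by
  have hJ := h.isLastJump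
  have := h.pos
  have hma := h.add_two_le_two_mul_mult hreg
  have hm2 := hJ.mult_le_add_one (by omega)
  have hmd : mult H ≤ d + 1 :=
    mult_le (by omega) fun h1 => (hd.2.2.2 _ h1).elim (by omega) (by omega)
  have hda := hJ.le_of_consec d hd
  by_contra hne
  have hda' := (hd.2.2.2 a hJ.mem).resolve_left (by omega)
  by_cases hlarge : a + 2 * n < d + mult H
  · have := mult_sub_one_add_card_le (S := {a + (2 * n + 1)})
      (singleton_subset_iff.2 hJ.add_mem) (by simp; omega)
    rw [card_singleton, h.card_eq] at this
    omega
  · exact mult_notMem H (h.isGapset.mem_of_consec hd (j := a + (2 * n + 1) - d - mult H)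
      (by rw [show d + (a + (2 * n + 1) - d - mult H) + mult H = a + (2 * n + 1) by omega]
          exact hJ.add_mem)
      (by omega) (by omega) (mult_pos H))

theorem not_consec_of_lt (h : OddSparse n H a) (hreg : 6 * n + 2 ∉ H) (had : a < d) :
    ¬ Consec H d (d + 2 * n) := by
  intro hd
  have hJ := h.isLastJump
  have := h.pos
  have := (hJ.le_or_le hd.1).resolve_left (by omega)
  have := h.le_add_mult hreg hd.2.1
  have := hJ.mult_le_add_one (by omega)
  have := mult_sub_one_add_card_le (S := {a + (2 * n + 1), d + 2 * n})
    (insert_subset hJ.add_mem (singleton_subset_iff.2 hd.2.1)) (by simp; omega)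
  rw [card_pair (by omega), h.card_eq] at this
  omega

theorem evenSparse_shrink (h : OddSparse n H a) (hreg : 6 * n + 2 ∉ H) :
    EvenSparse n (shrink (a - 1) H) (a - 1) ∧ 6 * n + 1 ∉ shrink (a - 1) H ∧
      stretch (a - 1) (shrink (a - 1) H) = H := by
  have hH := h.isGapset
  have := h.pos
  have := h.isLastJump.le_mult hH
  have := h.isLastJump.mult_le_add_one (by omega)
  have ha : a - 1 + 1 = a := by omega
  have hJ : IsLastJump (2 * n + 1) H (a - 1 + 1) := ha ▸ h.isLastJump
  have hstretch : stretch (a - 1) (shrink (a - 1) H) = H :=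
    stretch_shrink hH.1 (hJ.mem_of_lt hH one_pos (by omega)) (hJ.notMem (by omega) (by omega))
  refine ⟨⟨h.pos, isGapset_shrink hH hJ (by omega)
      (by have := h.add_two_le_two_mul_mult hreg; omega) fun ℓ hℓ => ha ▸ h.le_add_mult hreg hℓ,
    isLastJump_shrink hJ (by omega) (by omega) hH.1 (hJ.mem_of_lt hH one_pos (by omega))
      (fun d hd => ha.symm ▸ h.eq_of_consec hreg hd) fun d hd => h.not_consec_of_lt hreg (by omega),
    ?_⟩, fun h6 => ?_, hstretch⟩
  · have := card_stretch (c := a - 1) (zero_notMem_shrink (c := a - 1) (H := H))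
    rw [hstretch, h.card_eq] at this
    omega
  · have := h.le_six_mul_add_one hreg (mem_shrink.1 h6).2
    unfold shift at this
    split_ifs at this <;> omega

end OddSparse

end sparse

section pairChoice

variable {F x : ℕ} {W L : Finset ℕ}

def pairChoice (F : ℕ) (W L : Finset ℕ) : Finset ℕ := L ∪ (W \ L).image (F - ·)

theorem mem_pairChoice : x ∈ pairChoice F W L ↔ x ∈ L ∨ ∃ y ∈ W, y ∉ L ∧ F - y = x := by
  simp [pairChoice, and_assoc]

theorem mem_or_sub_mem_pairChoice (hx : x ∈ W) :
    x ∈ pairChoice F W L ∨ F - x ∈ pairChoice F W L := by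
  by_cases hxL : x ∈ L
  · exact Or.inl (mem_pairChoice.2 (Or.inl hxL))
  · exact Or.inr (mem_pairChoice.2 (Or.inr ⟨x, hx, hxL, rfl⟩))

theorem exists_of_mem_pairChoice (hL : L ⊆ W) (hx : x ∈ pairChoice F W L) :
    ∃ y ∈ W, x = y ∨ x = F - y := by
  rcases mem_pairChoice.1 hx with hx | ⟨y, hy, -, rfl⟩
  exacts [⟨x, hL hx, Or.inl rfl⟩, ⟨y, hy, Or.inr rfl⟩]

theorem card_pairChoice (hL : L ⊆ W) (hW : ∀ y ∈ W, 2 * y < F) : #(pairChoice F W L) = #W := by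
  have hdisj : Disjoint L ((W \ L).image (F - ·)) := disjoint_left.2 fun y hyL hy => by
    obtain ⟨z, hz, rfl⟩ := mem_image.1 hy
    have := hW _ (hL hyL)
    have := hW z (mem_sdiff.1 hz).1
    omega
  have hinj : Set.InjOn (F - ·) ↑(W \ L) := fun y hy z hz hyz => by
    have := hW y (mem_sdiff.1 hy).1
    have := hW z (mem_sdiff.1 hz).1
    simp only at hyz
    omega
  rw [pairChoice, card_union_of_disjoint hdisj, card_image_of_injOn hinj, card_sdiff_of_subset hL]
  have := card_le_card hL
  omega

theorem pairChoice_inter (hL : L ⊆ W) (hW : ∀ y ∈ W, 2 * y < F) : pairChoice F W L ∩ W = L := by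
  ext y
  rw [mem_inter, mem_pairChoice]
  constructor
  · rintro ⟨hy | ⟨z, hz, -, rfl⟩, hyW⟩
    · exact hy
    · have := hW _ hz
      have := hW _ hyW
      omega
  · exact fun hy => ⟨Or.inl hy, hL hy⟩

theorem pairChoice_inter_subset (hG : IsGapset G) (hF : F ∈ G) (hW : ∀ y ∈ W, 0 < y ∧ y < F) :
    pairChoice F W (G ∩ W) ⊆ G := by
  intro x hx
  rcases mem_pairChoice.1 hx with hx | ⟨y, hy, hyG, rfl⟩
  · exact (mem_inter.1 hx).1
  · obtain ⟨hy0, hyF⟩ := hW y hy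
    exact hG.mem_of_add_mem (x := y) (by rwa [Nat.add_sub_cancel' hyF.le]) hy0 (by omega)
      fun h => hyG (mem_inter.2 ⟨h, hy⟩)

end pairChoice

section symmetric

variable {n a c x : ℕ} {L : Finset ℕ}

def window (n : ℕ) : Finset ℕ := Icc (2 * n + 2) (3 * n)

theorem mem_window : x ∈ window n ↔ 2 * n + 2 ≤ x ∧ x ≤ 3 * n := mem_Icc

theorem card_window (n : ℕ) : #(window n) = n - 1 := by
  rw [window, Nat.card_Icc]
  omega

/-- The symmetric gapsets with Frobenius number `6n + 1` that are pure `2n`-sparse (the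
exceptional ones on the even side), listed by their elements in `window n`. -/
def symGapset (n : ℕ) (L : Finset ℕ) : Finset ℕ :=
  Icc 1 (2 * n - 1) ∪ {2 * n + 1, 4 * n + 1, 6 * n + 1} ∪ pairChoice (6 * n + 1) (window n) L

/-- The pseudo-symmetric gapsets with Frobenius number `6n + 2` that are pure `(2n + 1)`-sparse
(the exceptional ones on the odd side), listed by their elements in `window n`. -/
def pseudoSymGapset (n : ℕ) (L : Finset ℕ) : Finset ℕ :=
  Icc 1 (2 * n) ∪ {3 * n + 1, 4 * n + 1, 6 * n + 2} ∪ pairChoice (6 * n + 2) (window n) L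

theorem mem_symGapset : x ∈ symGapset n L ↔ (1 ≤ x ∧ x ≤ 2 * n - 1) ∨ x = 2 * n + 1 ∨
    x = 4 * n + 1 ∨ x = 6 * n + 1 ∨ x ∈ pairChoice (6 * n + 1) (window n) L := by
  simp only [symGapset, mem_union, mem_Icc, mem_insert, mem_singleton, or_assoc]

theorem mem_pseudoSymGapset : x ∈ pseudoSymGapset n L ↔ (1 ≤ x ∧ x ≤ 2 * n) ∨ x = 3 * n + 1 ∨
    x = 4 * n + 1 ∨ x = 6 * n + 2 ∨ x ∈ pairChoice (6 * n + 2) (window n) L := by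
  simp only [pseudoSymGapset, mem_union, mem_Icc, mem_insert, mem_singleton, or_assoc]

theorem symGapset_cases (hL : L ⊆ window n) (hx : x ∈ symGapset n L) :
    (1 ≤ x ∧ x ≤ 2 * n - 1) ∨ x = 2 * n + 1 ∨ (2 * n + 2 ≤ x ∧ x ≤ 4 * n - 1) ∨
      x = 4 * n + 1 ∨ x = 6 * n + 1 := by
  rcases mem_symGapset.1 hx with h | h | h | h | h
  · exact Or.inl h
  · exact Or.inr (Or.inl h)
  · exact Or.inr (Or.inr (Or.inr (Or.inl h)))
  · exact Or.inr (Or.inr (Or.inr (Or.inr h)))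
  · obtain ⟨y, hy, rfl | rfl⟩ := exists_of_mem_pairChoice hL h <;> rw [mem_window] at hy <;> omega

theorem pseudoSymGapset_cases (hL : L ⊆ window n) (hx : x ∈ pseudoSymGapset n L) :
    (1 ≤ x ∧ x ≤ 2 * n) ∨ (2 * n + 2 ≤ x ∧ x ≤ 4 * n) ∨ x = 4 * n + 1 ∨ x = 6 * n + 2 := by
  rcases mem_pseudoSymGapset.1 hx with h | h | h | h | h
  · exact Or.inl h
  · omega
  · exact Or.inr (Or.inr (Or.inl h))
  · exact Or.inr (Or.inr (Or.inr h))
  · obtain ⟨y, hy, rfl | rfl⟩ := exists_of_mem_pairChoice hL h <;> rw [mem_window] at hy <;> omega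

theorem isGapset_symGapset (hL : L ⊆ window n) : IsGapset (symGapset n L) := by
  refine isGapset_of_le (fun h => by have := symGapset_cases hL h; omega)
    fun z hz x y hx hxy hzxy => ?_
  by_cases hxs : x ≤ 2 * n - 1
  · exact Or.inl (mem_symGapset.2 (Or.inl ⟨hx, hxs⟩))
  rcases symGapset_cases hL hz with h | h | h | rfl | rfl
  · omega
  · omega
  · omega
  · exact Or.inr (mem_symGapset.2 (Or.inr (Or.inl (by omega))))
  · by_cases hx2 : x = 2 * n
    · exact Or.inr (mem_symGapset.2 (Or.inr (Or.inr (Or.inl (by omega)))))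
    by_cases hx3 : x = 2 * n + 1
    · exact Or.inl (mem_symGapset.2 (Or.inr (Or.inl hx3)))
    rw [show y = 6 * n + 1 - x by omega]
    rcases mem_or_sub_mem_pairChoice (F := 6 * n + 1) (L := L)
      (mem_window.2 ⟨by omega, by omega⟩ : x ∈ window n) with h | h
    · exact Or.inl (mem_symGapset.2 (Or.inr (Or.inr (Or.inr (Or.inr h)))))
    · exact Or.inr (mem_symGapset.2 (Or.inr (Or.inr (Or.inr (Or.inr h)))))

theorem isGapset_pseudoSymGapset (hL : L ⊆ window n) : IsGapset (pseudoSymGapset n L) := by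
  refine isGapset_of_le (fun h => by have := pseudoSymGapset_cases hL h; omega)
    fun z hz x y hx hxy hzxy => ?_
  by_cases hxs : x ≤ 2 * n
  · exact Or.inl (mem_pseudoSymGapset.2 (Or.inl ⟨hx, hxs⟩))
  rcases pseudoSymGapset_cases hL hz with h | h | rfl | rfl
  · omega
  · omega
  · omega
  · by_cases hx2 : x = 2 * n + 1
    · exact Or.inr (mem_pseudoSymGapset.2 (Or.inr (Or.inr (Or.inl (by omega)))))
    by_cases hx3 : x = 3 * n + 1
    · exact Or.inl (mem_pseudoSymGapset.2 (Or.inr (Or.inl hx3)))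
    rw [show y = 6 * n + 2 - x by omega]
    rcases mem_or_sub_mem_pairChoice (F := 6 * n + 2) (L := L)
      (mem_window.2 ⟨by omega, by omega⟩ : x ∈ window n) with h | h
    · exact Or.inl (mem_pseudoSymGapset.2 (Or.inr (Or.inr (Or.inr (Or.inr h)))))
    · exact Or.inr (mem_pseudoSymGapset.2 (Or.inr (Or.inr (Or.inr (Or.inr h)))))

theorem pureSparse_symGapset (hn : 0 < n) (hL : L ⊆ window n) :
    PureSparse (2 * n) (symGapset n L) := by
  have h21 : 2 * n + 1 ∈ symGapset n L := mem_symGapset.2 (Or.inr (Or.inl rfl))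
  have h41 : 4 * n + 1 ∈ symGapset n L := mem_symGapset.2 (Or.inr (Or.inr (Or.inl rfl)))
  have h61 : 6 * n + 1 ∈ symGapset n L :=
    mem_symGapset.2 (Or.inr (Or.inr (Or.inr (Or.inl rfl))))
  refine ⟨sparse_of_exists_succ fun u hu v hv huv => ?_, 4 * n + 1, 6 * n + 1,
    ⟨h41, h61, by omega, fun w hw => by have := symGapset_cases hL hw; omega⟩, by omega⟩
  rcases symGapset_cases hL hu with h | rfl | h | rfl | rfl
  · by_cases hu' : u < 2 * n - 1
    · exact ⟨u + 1, mem_symGapset.2 (Or.inl ⟨by omega, by omega⟩), by omega, by omega⟩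
    · exact ⟨2 * n + 1, h21, by omega, by omega⟩
  · exact ⟨4 * n + 1, h41, by omega, by omega⟩
  · exact ⟨4 * n + 1, h41, by omega, by omega⟩
  · exact ⟨6 * n + 1, h61, by omega, by omega⟩
  · have := symGapset_cases hL hv
    omega

theorem pureSparse_pseudoSymGapset (hn : 0 < n) (hL : L ⊆ window n) :
    PureSparse (2 * n + 1) (pseudoSymGapset n L) := by
  have h31 : 3 * n + 1 ∈ pseudoSymGapset n L := mem_pseudoSymGapset.2 (Or.inr (Or.inl rfl))
  have h41 : 4 * n + 1 ∈ pseudoSymGapset n L :=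
    mem_pseudoSymGapset.2 (Or.inr (Or.inr (Or.inl rfl)))
  have h62 : 6 * n + 2 ∈ pseudoSymGapset n L :=
    mem_pseudoSymGapset.2 (Or.inr (Or.inr (Or.inr (Or.inl rfl))))
  refine ⟨sparse_of_exists_succ fun u hu v hv huv => ?_, 4 * n + 1, 6 * n + 2,
    ⟨h41, h62, by omega, fun w hw => by have := pseudoSymGapset_cases hL hw; omega⟩, by omega⟩
  rcases pseudoSymGapset_cases hL hu with h | h | rfl | rfl
  · by_cases hu' : u < 2 * n
    · exact ⟨u + 1, mem_pseudoSymGapset.2 (Or.inl ⟨by omega, by omega⟩), by omega, by omega⟩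
    · exact ⟨3 * n + 1, h31, by omega, by omega⟩
  · exact ⟨4 * n + 1, h41, by omega, by omega⟩
  · exact ⟨6 * n + 2, h62, by omega, by omega⟩
  · have := pseudoSymGapset_cases hL hv
    omega

theorem card_symGapset (hn : 0 < n) (hL : L ⊆ window n) : #(symGapset n L) = 3 * n + 1 := by
  have hdisj : Disjoint (Icc 1 (2 * n - 1)) {2 * n + 1, 4 * n + 1, 6 * n + 1} :=
    disjoint_left.2 fun x hx hx' => by simp at hx hx'; omega
  have hdisj' : Disjoint (Icc 1 (2 * n - 1) ∪ {2 * n + 1, 4 * n + 1, 6 * n + 1})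
      (pairChoice (6 * n + 1) (window n) L) := disjoint_left.2 fun x hx hx' => by
    obtain ⟨y, hy, hxy⟩ := exists_of_mem_pairChoice hL hx'
    rw [mem_window] at hy
    simp at hx
    omega
  have h3 : #({2 * n + 1, 4 * n + 1, 6 * n + 1} : Finset ℕ) = 3 := by
    rw [card_insert_of_notMem (by simp; omega), card_pair (by omega)]
  rw [symGapset, card_union_of_disjoint hdisj', card_union_of_disjoint hdisj, h3, Nat.card_Icc,
    card_pairChoice hL fun y hy => by rw [mem_window] at hy; omega, card_window]
  omega

theorem card_pseudoSymGapset (hn : 0 < n) (hL : L ⊆ window n) :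
    #(pseudoSymGapset n L) = 3 * n + 2 := by
  have hdisj : Disjoint (Icc 1 (2 * n)) {3 * n + 1, 4 * n + 1, 6 * n + 2} :=
    disjoint_left.2 fun x hx hx' => by simp at hx hx'; omega
  have hdisj' : Disjoint (Icc 1 (2 * n) ∪ {3 * n + 1, 4 * n + 1, 6 * n + 2})
      (pairChoice (6 * n + 2) (window n) L) := disjoint_left.2 fun x hx hx' => by
    obtain ⟨y, hy, hxy⟩ := exists_of_mem_pairChoice hL hx'
    rw [mem_window] at hy
    simp at hx
    omega
  have h3 : #({3 * n + 1, 4 * n + 1, 6 * n + 2} : Finset ℕ) = 3 := by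
    rw [card_insert_of_notMem (by simp; omega), card_pair (by omega)]
  rw [pseudoSymGapset, card_union_of_disjoint hdisj', card_union_of_disjoint hdisj, h3,
    Nat.card_Icc, card_pairChoice hL fun y hy => by rw [mem_window] at hy; omega, card_window]
  omega

theorem symGapset_inter_window (hL : L ⊆ window n) : symGapset n L ∩ window n = L := by
  have hbase : (Icc 1 (2 * n - 1) ∪ {2 * n + 1, 4 * n + 1, 6 * n + 1}) ∩ window n = ∅ :=
    disjoint_iff_inter_eq_empty.1 (disjoint_left.2 fun x hx hxW => by
      rw [mem_window] at hxW
      simp at hx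
      omega)
  rw [symGapset, union_inter_distrib_right, hbase, empty_union,
    pairChoice_inter hL fun y hy => by rw [mem_window] at hy; omega]

theorem pseudoSymGapset_inter_window (hL : L ⊆ window n) :
    pseudoSymGapset n L ∩ window n = L := by
  have hbase : (Icc 1 (2 * n) ∪ {3 * n + 1, 4 * n + 1, 6 * n + 2}) ∩ window n = ∅ :=
    disjoint_iff_inter_eq_empty.1 (disjoint_left.2 fun x hx hxW => by
      rw [mem_window] at hxW
      simp at hx
      omega)
  rw [pseudoSymGapset, union_inter_distrib_right, hbase, empty_union,
    pairChoice_inter hL fun y hy => by rw [mem_window] at hy; omega]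

/-- `G` contains `symGapset n (G ∩ window n)`, which has the same size: `4n + 1 ∈ G` as the element
before `6n + 1`, then `2n ∉ G` and hence `2n + 1 ∈ G`. -/
theorem EvenSparse.eq_symGapset (h : EvenSparse n G c) (hexc : 6 * n + 1 ∈ G) :
    G = symGapset n (G ∩ window n) := by
  have := h.pos
  have hG := h.isGapset
  obtain ⟨h41, h2⟩ := h.isLastJump.sub_mem_and_notMem_of_two_mul_card_le hG (by omega) hexc
    (by omega) (by rw [h.card_eq]; omega)
  rw [show 6 * n + 1 - 2 * n = 2 * n + (2 * n + 1) by omega] at h41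
  have h21 := hG.mem_of_add_mem h41 (by omega) (by omega) h2
  have hsub : symGapset n (G ∩ window n) ⊆ G := by
    refine union_subset (union_subset (fun x hx => ?_) ?_)
      (pairChoice_inter_subset hG hexc fun y hy => ?_)
    · rw [mem_Icc] at hx
      exact h.isLastJump.mem_of_lt hG (by omega) (by omega)
    · rw [show 2 * n + (2 * n + 1) = 4 * n + 1 by omega] at h41
      simp [insert_subset_iff, h21, h41, hexc]
    · rw [mem_window] at hy
      omega
  refine (eq_of_subset_of_card_le hsub ?_).symm
  rw [card_symGapset h.pos inter_subset_right, h.card_eq]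

/-- `H` contains `pseudoSymGapset n (H ∩ window n)`, which has the same size: `4n + 1 ∈ H` as the
element before `6n + 2`, and `3n + 1 ∈ H` as half of `6n + 2`. -/
theorem OddSparse.eq_pseudoSymGapset (h : OddSparse n H a) (hexc : 6 * n + 2 ∈ H) :
    H = pseudoSymGapset n (H ∩ window n) := by
  have := h.pos
  have hH := h.isGapset
  obtain ⟨h41, -⟩ := h.isLastJump.sub_mem_and_notMem_of_two_mul_card_le hH (by omega) hexc
    (by omega) (by rw [h.card_eq]; omega)
  rw [show 6 * n + 2 - (2 * n + 1) = 4 * n + 1 by omega] at h41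
  have h31 : 3 * n + 1 ∈ H :=
    (hH.2 _ hexc (3 * n + 1) (3 * n + 1) (by omega) (by omega) (by omega)).elim id id
  have hsub : pseudoSymGapset n (H ∩ window n) ⊆ H := by
    refine union_subset (union_subset (fun x hx => ?_) ?_)
      (pairChoice_inter_subset hH hexc fun y hy => ?_)
    · rw [mem_Icc] at hx
      exact h.isLastJump.mem_of_lt hH (by omega) (by omega)
    · simp [insert_subset_iff, h31, h41, hexc]
    · rw [mem_window] at hy
      omega
  refine (eq_of_subset_of_card_le hsub ?_).symm
  rw [card_pseudoSymGapset h.pos inter_subset_right, h.card_eq]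

end symmetric

section bijection

variable {n : ℕ}

def sparseGapsets (κ g : ℕ) : Set (Finset ℕ) := {G | IsGapset G ∧ PureSparse κ G ∧ #G = g}

theorem EvenSparse.of_mem (hn : 0 < n) (hG : G ∈ sparseGapsets (2 * n) (3 * n + 1)) :
    EvenSparse n G (lastJump (2 * n) G) :=
  ⟨hn, hG.1, isLastJump_lastJump hG.2.1, hG.2.2⟩

theorem OddSparse.of_mem (hn : 0 < n) (hH : H ∈ sparseGapsets (2 * n + 1) (3 * n + 2)) :
    OddSparse n H (lastJump (2 * n + 1) H) :=
  ⟨hn, hH.1, isLastJump_lastJump hH.2.1, hH.2.2⟩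

theorem EvenSparse.mem {c : ℕ} (h : EvenSparse n G c) : G ∈ sparseGapsets (2 * n) (3 * n + 1) :=
  ⟨h.isGapset, h.isLastJump.pureSparse, h.card_eq⟩

theorem OddSparse.mem {a : ℕ} (h : OddSparse n H a) :
    H ∈ sparseGapsets (2 * n + 1) (3 * n + 2) :=
  ⟨h.isGapset, h.isLastJump.pureSparse, h.card_eq⟩

noncomputable def toOdd (n : ℕ) (G : Finset ℕ) : Finset ℕ :=
  if 6 * n + 1 ∈ G then pseudoSymGapset n (G ∩ window n) else stretch (lastJump (2 * n) G) G

noncomputable def toEven (n : ℕ) (H : Finset ℕ) : Finset ℕ :=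
  if 6 * n + 2 ∈ H then symGapset n (H ∩ window n) else shrink (lastJump (2 * n + 1) H - 1) H

theorem toOdd_mem (hn : 0 < n) (hG : G ∈ sparseGapsets (2 * n) (3 * n + 1)) :
    toOdd n G ∈ sparseGapsets (2 * n + 1) (3 * n + 2) := by
  unfold toOdd
  split_ifs with hexc
  · exact ⟨isGapset_pseudoSymGapset inter_subset_right,
      pureSparse_pseudoSymGapset hn inter_subset_right, card_pseudoSymGapset hn inter_subset_right⟩
  · exact ((EvenSparse.of_mem hn hG).oddSparse_stretch hexc).1.mem

theorem toEven_mem (hn : 0 < n) (hH : H ∈ sparseGapsets (2 * n + 1) (3 * n + 2)) :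
    toEven n H ∈ sparseGapsets (2 * n) (3 * n + 1) := by
  unfold toEven
  split_ifs with hexc
  · exact ⟨isGapset_symGapset inter_subset_right, pureSparse_symGapset hn inter_subset_right,
      card_symGapset hn inter_subset_right⟩
  · exact ((OddSparse.of_mem hn hH).evenSparse_shrink hexc).1.mem

theorem toEven_toOdd (hn : 0 < n) (hG : G ∈ sparseGapsets (2 * n) (3 * n + 1)) :
    toEven n (toOdd n G) = G := by
  have h := EvenSparse.of_mem hn hG
  unfold toOdd
  split_ifs with hexc
  · rw [toEven, if_pos (mem_pseudoSymGapset.2 (Or.inr (Or.inr (Or.inr (Or.inl rfl))))),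
      pseudoSymGapset_inter_window inter_subset_right, ← h.eq_symGapset hexc]
  · obtain ⟨h', hnot⟩ := h.oddSparse_stretch hexc
    rw [toEven, if_neg hnot, h'.isLastJump.lastJump_eq, Nat.add_sub_cancel,
      shrink_stretch h.isGapset.1]

theorem toOdd_toEven (hn : 0 < n) (hH : H ∈ sparseGapsets (2 * n + 1) (3 * n + 2)) :
    toOdd n (toEven n H) = H := by
  have h := OddSparse.of_mem hn hH
  unfold toEven
  split_ifs with hexc
  · rw [toOdd, if_pos (mem_symGapset.2 (Or.inr (Or.inr (Or.inr (Or.inl rfl))))),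
      symGapset_inter_window inter_subset_right, ← h.eq_pseudoSymGapset hexc]
  · obtain ⟨h', hnot, hstretch⟩ := h.evenSparse_shrink hexc
    rw [toOdd, if_neg hnot, h'.isLastJump.lastJump_eq, hstretch]

end bijection

end Gapset

theorem stmt19 (n : ℕ) (hn : 0 < n) :
    {G : Finset ℕ | IsGapset G ∧ PureSparse (2 * n) G ∧ G.card = 3 * n + 1}.ncard =
    {G : Finset ℕ | IsGapset G ∧ PureSparse (2 * n + 1) G ∧ G.card = 3 * n + 2}.ncard := by
  exact Set.ncard_congr (fun G _ => Gapset.toOdd n G) (fun _ hG => Gapset.toOdd_mem hn hG)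
    (fun G₁ G₂ h₁ h₂ h => by rw [← Gapset.toEven_toOdd hn h₁, h, Gapset.toEven_toOdd hn h₂])
    fun H hH => ⟨_, Gapset.toEven_mem hn hH, Gapset.toOdd_toEven hn hH⟩
end
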